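/- arXiv:1409.2736 — 5 statements merged into one kernel-verified Lean document; each statement's English description precedes it below -/
import Mathlib

section
/- For 0 ≤ n ≤ N₁ - 1 with N₁ = R - N and √R ≪ N < R, the partial sum of the exponential series satisfies ∑_{0 ≤ n ≤ N₁-1} R^n/n! < (R/N) · R^{N₁}/N₁!. -/
/-!
Below `N₁ = R - N` the ratio of consecutive terms `R^n/n!` is `(n+1)/R ≤ q := N₁/R < 1`,
so the partial sum is dominated by a geometric series ending at the `N₁`-th term:
it is at most `q/(1 - q) = N₁/N < R/N` times `R^{N₁}/N₁!`.
-/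

open Finset Nat

section GeometricTail

variable {K : Type*} [Field K] [LinearOrder K] [IsStrictOrderedRing K]

theorem sum_range_le_div_one_sub_mul_of_le_mul_succ {a : ℕ → K} {q : K} (hq₀ : 0 ≤ q)
    (hq₁ : q < 1) (ha₀ : 0 ≤ a 0) :
    ∀ M : ℕ, (∀ n < M, a n ≤ q * a (n + 1)) → ∑ n ∈ range M, a n ≤ q / (1 - q) * a M
  | 0, _ => by simpa using mul_nonneg (div_nonneg hq₀ (sub_nonneg.2 hq₁.le)) ha₀
  | M + 1, h => by
    have hq : 0 < 1 - q := sub_pos.2 hq₁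
    have ih := sum_range_le_div_one_sub_mul_of_le_mul_succ hq₀ hq₁ ha₀ M
      fun n hn => h n (n.lt_succ_of_lt hn)
    have hM := h M M.lt_succ_self
    calc ∑ n ∈ range (M + 1), a n = ∑ n ∈ range M, a n + a M := sum_range_succ _ _
      _ ≤ q / (1 - q) * a M + a M := add_le_add_left ih _
      _ = a M / (1 - q) := by field_simp; ring
      _ ≤ q / (1 - q) * a (M + 1) := by
        rw [div_mul_eq_mul_div]
        exact div_le_div_of_nonneg_right hM hq.le

end GeometricTail

theorem pow_succ_div_factorial_succ {K : Type*} [Field K] [CharZero K] (x : K) (n : ℕ) :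
    x ^ (n + 1) / (n + 1)! = x ^ n / n ! * (x / (n + 1)) := by
  rw [factorial_succ, cast_mul, pow_succ]
  push_cast
  field_simp

theorem pow_div_factorial_le_mul_succ {x : ℝ} (hx : 0 < x) {n m : ℕ} (hn : n < m) :
    x ^ n / n ! ≤ m / x * (x ^ (n + 1) / (n + 1)!) := by
  rw [pow_succ_div_factorial_succ,
    show m / x * (x ^ n / n ! * (x / (n + 1))) = x ^ n / n ! * (m / (n + 1)) by field_simp]
  exact le_mul_of_one_le_right (by positivity)
    ((one_le_div (by positivity)).2 (by exact_mod_cast hn))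

theorem stmt_0_general (R N : ℕ) (hN : 0 < N) (hNR : N < R) :
    ∑ n ∈ Finset.range (R - N), (R : ℝ) ^ n / (Nat.factorial n) <
      ((R : ℝ) / N) * ((R : ℝ) ^ (R - N) / (Nat.factorial (R - N))) := by
  have hR : (0 : ℝ) < R := by exact_mod_cast hN.trans hNR
  have hN' : (0 : ℝ) < N := by exact_mod_cast hN
  have hN₁ : ((R - N : ℕ) : ℝ) = R - N := by push_cast [hNR.le]; ring
  set q : ℝ := ((R - N : ℕ) : ℝ) / R
  have hq₁ : q < 1 := by rw [div_lt_one hR, hN₁]; linarith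
  have hq : q / (1 - q) = (R - N) / N := by
    simp only [q, hN₁]
    field_simp
    rw [sub_sub_cancel, mul_div_cancel_left₀ _ hN'.ne']
  calc ∑ n ∈ range (R - N), (R : ℝ) ^ n / n !
      ≤ q / (1 - q) * ((R : ℝ) ^ (R - N) / (R - N)!) :=
        sum_range_le_div_one_sub_mul_of_le_mul_succ (by positivity) hq₁ (by simp) _
          fun n hn => pow_div_factorial_le_mul_succ hR hn
    _ < (R : ℝ) / N * ((R : ℝ) ^ (R - N) / (R - N)!) := by
        rw [hq]
        gcongr
        linarith

/-- Geometric-series bound on the lower tail of the Taylor series of `e^R`: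
for positive integers `N < R` with `√R ≤ N`, setting `N₁ = R - N`,
`∑_{0 ≤ n ≤ N₁ - 1} R^n / n! < (R/N) · R^{N₁}/N₁!`. -/
theorem stmt_0 (R N : ℕ) (hN : 0 < N) (hNR : N < R)
    (hsqrt : Real.sqrt R ≤ N) :
    ∑ n ∈ Finset.range (R - N), (R : ℝ) ^ n / (Nat.factorial n) <
      ((R : ℝ) / N) * ((R : ℝ) ^ (R - N) / (Nat.factorial (R - N))) :=
  stmt_0_general R N hN hNR
end

section
/- Let ξ : ℤ₊ → ℂ be a bounded sequence and F_ξ(z) = ∑_{n≥0} ξ(n) z^n/n!. For every ε > 0 there exists C_ε such that for all integers R ≥ 2, N = ⌊R^{1/2} log R⌋, and all real θ: |F_ξ(R e(θ))| ≥ μ(R) (|W_R(θ)| − C_ε R^ε), where μ(R) = e^R/√(2πR), e(θ) = e^{2πiθ}, and W_R(θ) = ∑_{|n| ≤ N} ξ(n+R) e(nθ) e^{−n²/(2R)}. -/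
/-!
On `|z| = R` the Taylor terms of `F_ξ` are `ξ(n) e(nθ) Rⁿ/n!`. Telescoping
`log (Rⁿ⁺¹/(n+1)!) - log (Rⁿ/n!) = -log (1 + (n+1-R)/R)` and expanding the logarithm to second
order gives `Rⁿ/n! = (R^R/R!) exp(-(n-R)²/(2R) + O(|n-R|/R + |n-R|³/R²))`, and Stirling's formula
with Robbins' error term gives `R^R/R! = μ(R) (1 + O(1/R))`. So on the window `|n - R| ≤ N` the
terms of `F_ξ(R e(θ))` and of `μ(R) e(Rθ) W_R(θ)` differ in total by
`μ(R) O(N²/R + N⁴/R²) = μ(R) O(log⁴ R)`. Outside the window the terms are dominated by their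
value at `|n - R| = N + 1`, which is `O(μ(R) exp(-(log R)²/2))`, times a geometric series of
length `O(R)`. Finally `log⁴ R = O_ε(R^ε)`, and for small `R` the trivial bound `|W_R| = O(R)`
suffices.
-/

open Complex

noncomputable def e (θ : ℝ) : ℂ := Complex.exp (2 * Real.pi * Complex.I * θ)

noncomputable def Fxi (ξ : ℕ → ℂ) (z : ℂ) : ℂ := ∑' n : ℕ, ξ n * z ^ n / (Nat.factorial n)

noncomputable def W (ξ : ℕ → ℂ) (R : ℕ) (θ : ℝ) : ℂ :=
  ∑ n ∈ Finset.Icc (-(⌊Real.sqrt R * Real.log R⌋ : ℤ)) ⌊Real.sqrt R * Real.log R⌋,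
    ξ (n + R).toNat * e (n * θ) * Real.exp (-(n : ℝ) ^ 2 / (2 * R))

open Finset Filter
open scoped Real Nat

noncomputable def expTerm (x : ℝ) (n : ℕ) : ℝ := x ^ n / n !

lemma abs_log_one_add_sub_self_le {u : ℝ} (hu : |u| ≤ 1 / 2) :
    |Real.log (1 + u) - u| ≤ 2 * u ^ 2 := by
  have h := Real.abs_log_sub_add_sum_range_le (x := -u) (by rw [abs_neg]; linarith) 1
  rw [abs_neg] at h
  simp only [range_one, sum_singleton, zero_add, pow_one, CharP.cast_eq_zero, div_one,
    sub_neg_eq_add] at h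
  calc |Real.log (1 + u) - u| = |-u + Real.log (1 + u)| := by ring_nf
    _ ≤ |u| ^ 2 / (1 - |u|) := h
    _ ≤ 2 * u ^ 2 := by
      rw [div_le_iff₀ (by linarith), sq_abs]
      nlinarith [sq_nonneg u]

lemma expTerm_pos {x : ℝ} (hx : 0 < x) (n : ℕ) : 0 < expTerm x n := by
  unfold expTerm; positivity

lemma expTerm_succ (x : ℝ) (n : ℕ) : expTerm x (n + 1) = expTerm x n * (x / (n + 1)) := by
  simp only [expTerm, Nat.factorial_succ, pow_succ]
  push_cast
  field_simp

lemma log_expTerm_succ_sub {x : ℝ} (hx : 0 < x) (n : ℕ) :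
    Real.log (expTerm x (n + 1)) - Real.log (expTerm x n) = -Real.log (1 + (n + 1 - x) / x) := by
  rw [expTerm_succ, Real.log_mul (expTerm_pos hx n).ne' (by positivity), add_sub_cancel_left,
    ← Real.log_inv]
  congr 1
  field_simp
  ring

lemma abs_log_expTerm_sub_log_expTerm_le {x : ℝ} (hx : 0 < x) {m n : ℕ} (hmn : m ≤ n)
    (h : ∀ j ∈ Ico m n, 2 * |(j : ℝ) + 1 - x| ≤ x) :
    |Real.log (expTerm x n) - Real.log (expTerm x m)
        + ((n - x) ^ 2 + (n - x) - ((m - x) ^ 2 + (m - x))) / (2 * x)| ≤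
      2 * ∑ j ∈ Ico m n, (((j : ℝ) + 1 - x) / x) ^ 2 := by
  set q : ℕ → ℝ := fun j => ((j - x) ^ 2 + (j - x)) / (2 * x)
  have hlog := sum_Ico_sub (fun j => Real.log (expTerm x j)) hmn
  have hq := sum_Ico_sub q hmn
  simp only [log_expTerm_succ_sub hx] at hlog
  have hq' : ∀ j : ℕ, q (j + 1) - q j = ((j : ℝ) + 1 - x) / x := by
    intro j; simp only [q]; push_cast; field_simp; ring
  simp only [hq'] at hq
  calc _ = |∑ j ∈ Ico m n, (Real.log (1 + (j + 1 - x) / x) - (j + 1 - x) / x)| := by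
        rw [← abs_neg, ← hlog, show ((n - x) ^ 2 + (n - x) - ((m - x) ^ 2 + (m - x))) / (2 * x)
          = q n - q m by simp only [q]; ring, ← hq, ← sum_add_distrib,
          ← sum_neg_distrib]
        exact congrArg _ (sum_congr rfl fun j _ => by ring)
    _ ≤ ∑ j ∈ Ico m n, 2 * (((j : ℝ) + 1 - x) / x) ^ 2 := by
        refine (abs_sum_le_sum_abs _ _).trans (sum_le_sum fun j hj => ?_)
        refine abs_log_one_add_sub_self_le ?_
        rw [abs_div, abs_of_pos hx, div_le_iff₀ hx]
        linarith [h j hj]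
    _ = _ := by rw [mul_sum]

lemma abs_log_expTerm_sub_log_expTerm_le_of_window {x : ℝ} (hx : 0 < x) {m n : ℕ}
    (hm : (m : ℝ) ≤ x) (hn : x ≤ n) (hwin : 2 * ((n : ℝ) - m) ≤ x) :
    |Real.log (expTerm x n) - Real.log (expTerm x m)
        + ((n - x) ^ 2 + (n - x) - ((m - x) ^ 2 + (m - x))) / (2 * x)| ≤
      2 * ((n : ℝ) - m) ^ 3 / x ^ 2 := by
  have hmn : m ≤ n := by exact_mod_cast hm.trans hn
  have hj : ∀ j ∈ Ico m n, |(j : ℝ) + 1 - x| ≤ n - m := fun j hj => by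
    obtain ⟨h1, h2⟩ := Finset.mem_Ico.mp hj
    have h1' : (m : ℝ) ≤ j := by exact_mod_cast h1
    have h2' : (j : ℝ) + 1 ≤ n := by exact_mod_cast h2
    rw [abs_le]
    constructor <;> linarith
  refine (abs_log_expTerm_sub_log_expTerm_le hx hmn fun j hj' => ?_).trans ?_
  · linarith [hj j hj']
  calc 2 * ∑ j ∈ Ico m n, (((j : ℝ) + 1 - x) / x) ^ 2
      ≤ 2 * ∑ _j ∈ Ico m n, ((n : ℝ) - m) ^ 2 / x ^ 2 := by
        gcongr with j hj'
        rw [div_pow, ← sq_abs]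
        gcongr
        exact hj j hj'
    _ = 2 * ((n : ℝ) - m) ^ 3 / x ^ 2 := by
        rw [sum_const, Nat.card_Ico, nsmul_eq_mul, Nat.cast_sub hmn]
        ring

lemma abs_log_expTerm_sub_log_expTerm_self_le {R : ℕ} (hR : 0 < R) {m : ℕ}
    (hm : 2 * |(m : ℝ) - R| ≤ R) :
    |Real.log (expTerm R m) - Real.log (expTerm R R) + ((m : ℝ) - R) ^ 2 / (2 * R)| ≤
      |(m : ℝ) - R| / (2 * R) + 2 * |(m : ℝ) - R| ^ 3 / (R : ℝ) ^ 2 := by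
  have hRpos : (0 : ℝ) < R := Nat.cast_pos.mpr hR
  have hdrift : 0 ≤ |(m : ℝ) - R| / (2 * R) := by positivity
  rcases le_total (R : ℝ) m with hRm | hmR
  · rw [abs_of_nonneg (sub_nonneg.mpr hRm)] at hm hdrift ⊢
    have h := abs_log_expTerm_sub_log_expTerm_le_of_window hRpos le_rfl hRm hm
    rw [show (((m : ℝ) - R) ^ 2 + (m - R) - (((R : ℝ) - R) ^ 2 + (R - R))) / (2 * R) =
      ((m : ℝ) - R) ^ 2 / (2 * R) + (m - R) / (2 * R) by ring] at h
    rw [abs_le] at h ⊢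
    constructor <;> linarith [h.1, h.2]
  · rw [abs_of_nonpos (sub_nonpos.mpr hmR), neg_sub] at hm hdrift ⊢
    have h := abs_log_expTerm_sub_log_expTerm_le_of_window hRpos hmR le_rfl hm
    rw [show (((R : ℝ) - R) ^ 2 + (R - R) - (((m : ℝ) - R) ^ 2 + (m - R))) / (2 * R) =
      -(((m : ℝ) - R) ^ 2 / (2 * R)) + (R - m) / (2 * R) by ring] at h
    rw [abs_le] at h ⊢
    constructor <;> linarith [h.1, h.2]

noncomputable def stirlingPeak (x : ℝ) : ℝ := Real.exp x / √(2 * π * x)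

lemma stirlingPeak_pos {x : ℝ} (hx : 0 < x) : 0 < stirlingPeak x := by
  unfold stirlingPeak; positivity

lemma log_stirlingSeq_le {n : ℕ} (hn : n ≠ 0) :
    Real.log (Stirling.stirlingSeq n) ≤ Real.log √π + 1 / (12 * n) := by
  set a : ℕ → ℝ := fun k => Real.log (Stirling.stirlingSeq (k + 1)) - 1 / (12 * (k + 1))
  have ha : Monotone a := monotone_nat_of_le_succ fun k => by
    have h := Stirling.log_stirlingSeq_sdiff_le (k + 1)
    have : (1 : ℝ) / (12 * (k + 1 : ℕ) * ((k + 1 : ℕ) + 1)) =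
        1 / (12 * (k + 1)) - 1 / (12 * ((k + 1 : ℕ) + 1)) := by
      push_cast; field_simp; ring
    simp only [a]
    push_cast at h this ⊢
    linarith
  have hlim : Tendsto a atTop (nhds (Real.log √π - 0)) := by
    refine ((Real.continuousAt_log (by positivity)).tendsto.comp
      (Stirling.tendsto_stirlingSeq_sqrt_pi.comp (tendsto_add_atTop_nat 1))).sub ?_
    have h := tendsto_one_div_add_atTop_nhds_zero_nat.const_mul (1 / 12 : ℝ)
    rw [mul_zero] at h
    convert h using 2 with k
    field_simp
  obtain ⟨k, rfl⟩ := Nat.exists_eq_add_one_of_ne_zero hn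
  have := ha.ge_of_tendsto hlim k
  simp only [a, sub_zero] at this
  push_cast
  linarith

lemma expTerm_self_eq {R : ℕ} (hR : R ≠ 0) :
    expTerm R R = stirlingPeak R * (√π / Stirling.stirlingSeq R) := by
  have hs : √(2 * π * R) = √π * √(2 * R) := by
    rw [← Real.sqrt_mul Real.pi_pos.le]; ring_nf
  simp only [expTerm, stirlingPeak, Stirling.stirlingSeq, hs, div_pow, ← Real.exp_one_pow,
    ← Real.exp_nat_mul]
  field_simp

lemma abs_log_expTerm_self_sub_log_stirlingPeak_le {R : ℕ} (hR : R ≠ 0) :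
    |Real.log (expTerm R R) - Real.log (stirlingPeak R)| ≤ 1 / (12 * R) := by
  have hR' : (0 : ℝ) < R := by positivity
  have hs := Stirling.sqrt_pi_le_stirlingSeq hR
  have hs0 : 0 < Stirling.stirlingSeq R := lt_of_lt_of_le (by positivity) hs
  rw [expTerm_self_eq hR, Real.log_mul (stirlingPeak_pos hR').ne' (by positivity),
    Real.log_div (by positivity) hs0.ne', add_sub_cancel_left, abs_le]
  have := Real.log_le_log (by positivity) hs
  have := log_stirlingSeq_le hR
  constructor <;> linarith

/-- Stirling contributes `1 / (12 x)`, the drift of the telescoped sum `k / (2 x)`, and the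
second-order remainder of `log (1 + u)` the cubic term. -/
noncomputable def gaussErr (x k : ℝ) : ℝ := 1 / (12 * x) + k / (2 * x) + 2 * k ^ 3 / x ^ 2

lemma gaussErr_mono {x k l : ℝ} (hx : 0 < x) (hk : 0 ≤ k) (hkl : k ≤ l) :
    gaussErr x k ≤ gaussErr x l := by
  unfold gaussErr; gcongr

noncomputable def gaussApprox (x : ℝ) (m : ℕ) : ℝ :=
  stirlingPeak x * Real.exp (-((m : ℝ) - x) ^ 2 / (2 * x))

lemma gaussApprox_pos {x : ℝ} (hx : 0 < x) (m : ℕ) : 0 < gaussApprox x m :=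
  mul_pos (stirlingPeak_pos hx) (Real.exp_pos _)

lemma gaussApprox_le {x : ℝ} (hx : 0 < x) (m : ℕ) : gaussApprox x m ≤ stirlingPeak x := by
  refine mul_le_of_le_one_right (stirlingPeak_pos hx).le (Real.exp_le_one_iff.mpr ?_)
  rw [neg_div]
  exact neg_nonpos.mpr (by positivity)

lemma abs_log_expTerm_sub_log_gaussApprox_le {R : ℕ} (hR : 0 < R) {m : ℕ}
    (hm : 2 * |(m : ℝ) - R| ≤ R) :
    |Real.log (expTerm R m) - Real.log (gaussApprox R m)| ≤ gaussErr R |(m : ℝ) - R| := by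
  have hRpos : (0 : ℝ) < R := Nat.cast_pos.mpr hR
  have h1 := abs_log_expTerm_sub_log_expTerm_self_le hR hm
  have h2 := abs_log_expTerm_self_sub_log_stirlingPeak_le hR.ne'
  rw [gaussApprox, Real.log_mul (stirlingPeak_pos hRpos).ne' (Real.exp_pos _).ne', Real.log_exp,
    neg_div, gaussErr]
  rw [abs_le] at h1 h2 ⊢
  constructor <;> linarith [h1.1, h1.2, h2.1, h2.2]

lemma abs_exp_sub_exp_le {a b : ℝ} (h : |a - b| ≤ 1) :
    |Real.exp a - Real.exp b| ≤ 2 * Real.exp b * |a - b| := by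
  rw [show Real.exp a - Real.exp b = Real.exp b * (Real.exp (a - b) - 1) by
    rw [mul_sub, ← Real.exp_add, add_sub_cancel, mul_one], abs_mul, abs_of_pos (Real.exp_pos b),
    mul_comm 2, mul_assoc]
  exact mul_le_mul_of_nonneg_left (Real.abs_exp_sub_one_le h) (Real.exp_pos b).le

lemma abs_expTerm_sub_gaussApprox_le {R : ℕ} (hR : 0 < R) {m : ℕ}
    (hm : 2 * |(m : ℝ) - R| ≤ R) (hδ : gaussErr R |(m : ℝ) - R| ≤ 1) :
    |expTerm R m - gaussApprox R m| ≤ 2 * gaussApprox R m * gaussErr R |(m : ℝ) - R| := by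
  have hRpos : (0 : ℝ) < R := Nat.cast_pos.mpr hR
  have h := abs_log_expTerm_sub_log_gaussApprox_le hR hm
  have hg := gaussApprox_pos hRpos m
  have hexp := abs_exp_sub_exp_le (h.trans hδ)
  rw [Real.exp_log (expTerm_pos hRpos m), Real.exp_log hg] at hexp
  exact hexp.trans (by gcongr)

lemma summable_expTerm (x : ℝ) : Summable (expTerm x) :=
  Real.summable_pow_div_factorial x

lemma expTerm_le_expTerm {x : ℝ} (hx : 0 < x) {n m : ℕ} (hnm : n ≤ m) (hm : (m : ℝ) ≤ x) :
    expTerm x n ≤ expTerm x m := by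
  induction m, hnm using Nat.le_induction with
  | base => exact le_rfl
  | succ m _ ih =>
    push_cast at hm
    rw [expTerm_succ]
    exact (ih (by linarith)).trans
      (le_mul_of_one_le_right (expTerm_pos hx m).le ((one_le_div (by positivity)).mpr hm))

lemma sum_range_expTerm_le {x : ℝ} (hx : 0 < x) {m : ℕ} (hm : (m : ℝ) ≤ x) :
    ∑ n ∈ range (m + 1), expTerm x n ≤ (m + 1) * expTerm x m := by
  have := sum_le_card_nsmul (range (m + 1)) (expTerm x) (expTerm x m) fun n hn =>
    expTerm_le_expTerm hx (Nat.lt_succ_iff.mp (mem_range.mp hn)) hm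
  simpa using this

lemma expTerm_add_le {x : ℝ} (hx : 0 < x) {K : ℕ} (hK : x < K) (i : ℕ) :
    expTerm x (K + i) ≤ expTerm x K * (x / K) ^ i := by
  induction i with
  | zero => simp
  | succ i ih =>
    have := expTerm_pos hx K
    rw [← add_assoc, expTerm_succ, pow_succ, ← mul_assoc]
    gcongr
    · exact_mod_cast (hx.trans hK)
    · exact_mod_cast (by omega : K ≤ K + i + 1)

lemma tsum_expTerm_add_le {x : ℝ} (hx : 0 < x) {K : ℕ} (hK : x < K) :
    ∑' i, expTerm x (i + K) ≤ expTerm x K * (K / (K - x)) := by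
  have hK0 : (0 : ℝ) < K := hx.trans hK
  have hq : x / K < 1 := (div_lt_one hK0).mpr hK
  calc ∑' i, expTerm x (i + K) ≤ ∑' i, expTerm x K * (x / K) ^ i :=
        ((summable_nat_add_iff K).mpr (summable_expTerm x)).tsum_le_tsum
          (fun i => add_comm i K ▸ expTerm_add_le hx hK i)
          ((summable_geometric_of_lt_one (by positivity) hq).mul_left _)
    _ = expTerm x K * (K / (K - x)) := by
        rw [tsum_mul_left, tsum_geometric_of_lt_one (by positivity) hq]
        congr 1
        field_simp

lemma expTerm_le_of_abs_sub_eq {R N m : ℕ} (hR : 0 < R) (hN : 2 * ((N : ℝ) + 1) ≤ R)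
    (hδ : gaussErr R (N + 1) ≤ 1) (hm : |(m : ℝ) - R| = N + 1) :
    expTerm R m ≤ 3 * stirlingPeak R * Real.exp (-((N : ℝ) + 1) ^ 2 / (2 * R)) := by
  have h := abs_expTerm_sub_gaussApprox_le hR (hm ▸ hN) (hm ▸ hδ)
  have hg : gaussApprox R m = stirlingPeak R * Real.exp (-((N : ℝ) + 1) ^ 2 / (2 * R)) := by
    rw [gaussApprox, ← sq_abs, hm]
  rw [hm] at h
  rw [mul_assoc, ← hg]
  have := gaussApprox_pos (Nat.cast_pos.mpr hR) m
  linarith [le_abs_self (expTerm R m - gaussApprox R m), mul_le_mul_of_nonneg_left hδ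
    (by positivity : (0 : ℝ) ≤ 2 * gaussApprox R m)]

lemma sum_range_expTerm_below_window_le {R N : ℕ} (hR : 0 < R) (hN : 2 * ((N : ℝ) + 1) ≤ R)
    (hδ : gaussErr R (N + 1) ≤ 1) :
    ∑ n ∈ range (R - N), expTerm R n ≤
      3 * R * stirlingPeak R * Real.exp (-((N : ℝ) + 1) ^ 2 / (2 * R)) := by
  have hNR : N + 1 ≤ R := by exact_mod_cast (by push_cast; linarith : ((N + 1 : ℕ) : ℝ) ≤ R)
  have hcast : ((R - (N + 1) : ℕ) : ℝ) = R - (N + 1) := by push_cast [Nat.cast_sub hNR]; ring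
  have h1 := sum_range_expTerm_le (Nat.cast_pos.mpr hR) (m := R - (N + 1)) (by rw [hcast]; linarith)
  have h2 := expTerm_le_of_abs_sub_eq hR hN hδ (m := R - (N + 1))
    (by rw [hcast, show (R : ℝ) - (N + 1) - R = -(N + 1) by ring, abs_neg,
      abs_of_nonneg (by positivity)])
  rw [show R - (N + 1) + 1 = R - N by omega, hcast] at h1
  calc _ ≤ ((R : ℝ) - (N + 1) + 1) * expTerm R (R - (N + 1)) := h1
    _ ≤ R * (3 * stirlingPeak R * Real.exp (-((N : ℝ) + 1) ^ 2 / (2 * R))) := by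
        have := expTerm_pos (Nat.cast_pos.mpr hR) (R - (N + 1))
        gcongr
        linarith
    _ = _ := by ring

lemma tsum_expTerm_above_window_le {R N : ℕ} (hR : 0 < R) (hN : 2 * ((N : ℝ) + 1) ≤ R)
    (hδ : gaussErr R (N + 1) ≤ 1) :
    ∑' i, expTerm R (i + (R + N + 1)) ≤
      6 * R * stirlingPeak R * Real.exp (-((N : ℝ) + 1) ^ 2 / (2 * R)) := by
  have hRpos : (0 : ℝ) < R := Nat.cast_pos.mpr hR
  have h1 := tsum_expTerm_add_le hRpos (K := R + N + 1) (by push_cast; linarith)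
  have h2 := expTerm_le_of_abs_sub_eq hR hN hδ (m := R + N + 1)
    (by push_cast; rw [show (R : ℝ) + N + 1 - R = N + 1 by ring, abs_of_nonneg (by positivity)])
  have h3 : ((R + N + 1 : ℕ) : ℝ) / ((R + N + 1 : ℕ) - R) ≤ 2 * R := by
    push_cast
    rw [div_le_iff₀ (by linarith)]
    nlinarith
  have h4 : (0 : ℝ) ≤ ((R + N + 1 : ℕ) : ℝ) / ((R + N + 1 : ℕ) - R) := by
    push_cast; exact div_nonneg (by positivity) (by linarith)
  have := stirlingPeak_pos hRpos
  calc _ ≤ _ := h1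
    _ ≤ 3 * stirlingPeak R * Real.exp (-((N : ℝ) + 1) ^ 2 / (2 * R)) * (2 * R) :=
        mul_le_mul h2 h3 h4 (by positivity)
    _ = _ := by ring

lemma sum_Icc_abs_expTerm_sub_gaussApprox_le {R N : ℕ} (hR : 0 < R)
    (hN : 2 * ((N : ℝ) + 1) ≤ R) (hδ : gaussErr R (N + 1) ≤ 1) :
    ∑ m ∈ Icc (R - N) (R + N), |expTerm R m - gaussApprox R m| ≤
      2 * (2 * N + 1) * stirlingPeak R * gaussErr R N := by
  have hRpos : (0 : ℝ) < R := Nat.cast_pos.mpr hR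
  have hterm : ∀ m ∈ Icc (R - N) (R + N),
      |expTerm R m - gaussApprox R m| ≤ 2 * stirlingPeak R * gaussErr R N := by
    intro m hm
    have hmN : |(m : ℝ) - R| ≤ N := by
      obtain ⟨h1, h2⟩ := Finset.mem_Icc.mp hm
      have h1' : (R : ℝ) ≤ m + N := by exact_mod_cast (by omega : R ≤ m + N)
      have h2' : (m : ℝ) ≤ R + N := by exact_mod_cast h2
      rw [abs_le]
      constructor <;> linarith
    have hδm : gaussErr R |(m : ℝ) - R| ≤ gaussErr R N := gaussErr_mono hRpos (abs_nonneg _) hmN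
    calc _ ≤ 2 * gaussApprox R m * gaussErr R |(m : ℝ) - R| :=
          abs_expTerm_sub_gaussApprox_le hR (by linarith)
            (hδm.trans ((gaussErr_mono hRpos (by positivity) (by linarith)).trans hδ))
      _ ≤ 2 * stirlingPeak R * gaussErr R N := by
          have := stirlingPeak_pos hRpos
          have : 0 ≤ gaussErr R |(m : ℝ) - R| := by unfold gaussErr; positivity
          gcongr
          exact gaussApprox_le hRpos m
  calc _ ≤ ∑ _m ∈ Icc (R - N) (R + N), 2 * stirlingPeak R * gaussErr R N := sum_le_sum hterm
    _ = _ := by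
        have hNR : N ≤ R := by exact_mod_cast (by linarith : (N : ℝ) ≤ R)
        rw [sum_const, Nat.card_Icc, nsmul_eq_mul, show R + N + 1 - (R - N) = 2 * N + 1 by omega]
        push_cast
        ring

lemma norm_e (θ : ℝ) : ‖e θ‖ = 1 := by
  rw [e, show 2 * (π : ℂ) * I * θ = ((2 * π * θ : ℝ) : ℂ) * I by push_cast; ring]
  exact Complex.norm_exp_ofReal_mul_I _

lemma e_add (a b : ℝ) : e (a + b) = e a * e b := by
  rw [e, e, e, ← Complex.exp_add]; push_cast; ring_nf

lemma e_pow (θ : ℝ) (n : ℕ) : e θ ^ n = e (n * θ) := by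
  rw [e, e, ← Complex.exp_nat_mul]; push_cast; ring_nf

lemma Fxi_ofReal_mul_e (ξ : ℕ → ℂ) (x θ : ℝ) :
    Fxi ξ (x * e θ) = ∑' n, ξ n * e (n * θ) * (expTerm x n : ℂ) := by
  refine tsum_congr fun n => ?_
  rw [mul_pow, e_pow, expTerm]
  push_cast
  ring

lemma norm_mul_ofReal_le {a : ℂ} {M : ℝ} (ha : ‖a‖ ≤ M) (w : ℝ) : ‖a * (w : ℂ)‖ ≤ M * |w| := by
  rw [norm_mul, Complex.norm_real, Real.norm_eq_abs]
  exact mul_le_mul_of_nonneg_right ha (abs_nonneg w)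

lemma norm_sum_mul_ofReal_le {a : ℕ → ℂ} {M : ℝ} (ha : ∀ n, ‖a n‖ ≤ M) (s : Finset ℕ)
    (w : ℕ → ℝ) : ‖∑ n ∈ s, a n * (w n : ℂ)‖ ≤ M * ∑ n ∈ s, |w n| := by
  rw [mul_sum]
  exact (norm_sum_le _ _).trans (sum_le_sum fun n _ => norm_mul_ofReal_le (ha n) (w n))

lemma norm_tsum_mul_ofReal_le {a : ℕ → ℂ} {M : ℝ} (ha : ∀ n, ‖a n‖ ≤ M) {w : ℕ → ℝ}
    (hw : Summable w) (hw0 : ∀ n, 0 ≤ w n) : ‖∑' n, a n * (w n : ℂ)‖ ≤ M * ∑' n, w n := by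
  have hb : ∀ n, ‖a n * (w n : ℂ)‖ ≤ M * w n := fun n =>
    (norm_mul_ofReal_le (ha n) (w n)).trans_eq (by rw [abs_of_nonneg (hw0 n)])
  rw [← tsum_mul_left]
  exact tsum_of_norm_bounded (hw.mul_left M).hasSum hb

lemma tsum_eq_sum_range_add_sum_Icc_add_tsum {f : ℕ → ℂ} (hf : Summable f) {a b : ℕ}
    (hab : a ≤ b + 1) :
    ∑' n, f n = ∑ n ∈ range a, f n + ∑ n ∈ Icc a b, f n + ∑' i, f (i + (b + 1)) := by
  rw [← hf.sum_add_tsum_nat_add (b + 1), ← sum_range_add_sum_Ico _ hab,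
    Finset.Ico_add_one_right_eq_Icc]

lemma norm_Fxi_sub_sum_gaussApprox_le {ξ : ℕ → ℂ} {M : ℝ} (hξ : ∀ n, ‖ξ n‖ ≤ M) {R N : ℕ}
    (hR : 0 < R) (hN : 2 * ((N : ℝ) + 1) ≤ R) (hδ : gaussErr R (N + 1) ≤ 1) (θ : ℝ) :
    ‖Fxi ξ (R * e θ) - ∑ m ∈ Icc (R - N) (R + N), ξ m * e (m * θ) * (gaussApprox R m : ℂ)‖ ≤
      M * stirlingPeak R *
        (9 * R * Real.exp (-((N : ℝ) + 1) ^ 2 / (2 * R)) + 2 * (2 * N + 1) * gaussErr R N) := by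
  have hRpos : (0 : ℝ) < R := Nat.cast_pos.mpr hR
  have hM : 0 ≤ M := (norm_nonneg _).trans (hξ 0)
  set a : ℕ → ℂ := fun n => ξ n * e (n * θ)
  have ha : ∀ n, ‖a n‖ ≤ M := fun n => by simp only [a, norm_mul, norm_e, mul_one, hξ]
  have ht := summable_expTerm R
  have hf : Summable fun n => a n * (expTerm R n : ℂ) :=
    Summable.of_norm_bounded (ht.mul_left M) fun n =>
      (norm_mul_ofReal_le (ha n) _).trans_eq (by rw [abs_of_pos (expTerm_pos hRpos n)])
  have hwindow : ∑ m ∈ Icc (R - N) (R + N), a m * (expTerm R m : ℂ)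
      - ∑ m ∈ Icc (R - N) (R + N), ξ m * e (m * θ) * (gaussApprox R m : ℂ) =
      ∑ m ∈ Icc (R - N) (R + N), a m * ((expTerm R m - gaussApprox R m : ℝ) : ℂ) := by
    rw [← sum_sub_distrib]
    exact sum_congr rfl fun m _ => by simp only [a]; push_cast; ring
  have hbelow := (norm_sum_mul_ofReal_le ha (range (R - N)) (expTerm R)).trans
    (mul_le_mul_of_nonneg_left ((sum_congr rfl fun n _ => abs_of_pos (expTerm_pos hRpos n))
      |>.trans_le (sum_range_expTerm_below_window_le hR hN hδ)) hM)
  have hin := (norm_sum_mul_ofReal_le ha (Icc (R - N) (R + N)) _).trans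
    (mul_le_mul_of_nonneg_left (sum_Icc_abs_expTerm_sub_gaussApprox_le hR hN hδ) hM)
  have habove := (norm_tsum_mul_ofReal_le (fun i => ha (i + (R + N + 1)))
    ((summable_nat_add_iff _).mpr ht) fun i => (expTerm_pos hRpos _).le).trans
    (mul_le_mul_of_nonneg_left (tsum_expTerm_above_window_le hR hN hδ) hM)
  rw [← Complex.ofReal_natCast, Fxi_ofReal_mul_e,
    tsum_eq_sum_range_add_sum_Icc_add_tsum hf (by omega : R - N ≤ R + N + 1),
    add_sub_right_comm, add_sub_assoc, hwindow]
  refine (norm_add₃_le ..).trans ?_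
  linarith

lemma sum_gaussApprox_eq_W (ξ : ℕ → ℂ) {R : ℕ} (θ : ℝ) (hN : ⌊√(R : ℝ) * Real.log R⌋₊ ≤ R) :
    ∑ m ∈ Icc (R - ⌊√(R : ℝ) * Real.log R⌋₊) (R + ⌊√(R : ℝ) * Real.log R⌋₊),
        ξ m * e (m * θ) * (gaussApprox R m : ℂ) =
      stirlingPeak R * e (R * θ) * W ξ R θ := by
  have hfloor : ⌊√(R : ℝ) * Real.log R⌋ = (⌊√(R : ℝ) * Real.log R⌋₊ : ℤ) :=
    (Int.natCast_floor_eq_floor (by positivity)).symm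
  rw [W, hfloor, mul_sum]
  symm
  refine sum_nbij' (fun n => (n + R).toNat) (fun m => (m : ℤ) - R) ?_ ?_ ?_ ?_ ?_
  · intro n hn; simp only [mem_Icc] at hn ⊢; omega
  · intro m hm; simp only [mem_Icc] at hm ⊢; omega
  · intro n hn; simp only [mem_Icc] at hn; omega
  · intro m _; simp
  · intro n hn
    simp only [mem_Icc] at hn
    have hcast : (((n + R).toNat : ℕ) : ℝ) = n + R := by
      exact_mod_cast Int.toNat_of_nonneg (by omega)
    rw [gaussApprox, hcast, add_sub_cancel_right, add_mul, e_add]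
    push_cast
    ring

lemma gaussErr_sq_mul {s : ℝ} (hs : 0 < s) (k : ℝ) :
    gaussErr (s ^ 2) (s * k) = 1 / (12 * s ^ 2) + k / (2 * s) + 2 * k ^ 3 / s := by
  rw [gaussErr]
  field_simp

lemma mul_exp_neg_sq_div_le {x k : ℝ} (hx : 0 < x) (hlog : 0 ≤ Real.log x)
    (hk : √x * Real.log x ≤ k) : x * Real.exp (-k ^ 2 / (2 * x)) ≤ 3 := by
  have hsq : x * Real.log x ^ 2 ≤ k ^ 2 := by
    calc x * Real.log x ^ 2 = (√x * Real.log x) ^ 2 := by rw [mul_pow, Real.sq_sqrt hx.le]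
      _ ≤ k ^ 2 := by gcongr
  calc x * Real.exp (-k ^ 2 / (2 * x))
      ≤ Real.exp (Real.log x) * Real.exp (-Real.log x ^ 2 / 2) := by
        rw [Real.exp_log hx]
        refine mul_le_mul_of_nonneg_left (Real.exp_le_exp.mpr ?_) hx.le
        rw [div_le_div_iff₀ (by positivity) (by norm_num)]
        nlinarith
    _ = Real.exp (Real.log x - Real.log x ^ 2 / 2) := by rw [← Real.exp_add]; ring_nf
    _ ≤ Real.exp 1 := by gcongr; nlinarith [sq_nonneg (Real.log x - 1)]
    _ ≤ 3 := by linarith [Real.exp_one_lt_d9]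

lemma floor_sqrt_mul_log_bounds {R : ℕ} (hlog : 1 ≤ Real.log R)
    (hcube : 64 * Real.log R ^ 3 ≤ √(R : ℝ)) :
    2 * ((⌊√(R : ℝ) * Real.log R⌋₊ : ℝ) + 1) ≤ R ∧
    gaussErr R (⌊√(R : ℝ) * Real.log R⌋₊ + 1) ≤ 1 ∧
    9 * R * Real.exp (-((⌊√(R : ℝ) * Real.log R⌋₊ : ℝ) + 1) ^ 2 / (2 * R))
      + 2 * (2 * ⌊√(R : ℝ) * Real.log R⌋₊ + 1) * gaussErr R ⌊√(R : ℝ) * Real.log R⌋₊ ≤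
      43 * Real.log R ^ 4 := by
  set ℓ := Real.log R
  set s := √(R : ℝ)
  set N := ⌊s * ℓ⌋₊
  have hR : (0 : ℝ) < R := zero_lt_one.trans ((Real.log_pos_iff R.cast_nonneg).mp (by linarith))
  have hsR : (R : ℝ) = s ^ 2 := (Real.sq_sqrt hR.le).symm
  have hℓ3 : ℓ ≤ ℓ ^ 3 := by
    nlinarith [mul_nonneg (by linarith : (0 : ℝ) ≤ ℓ) (by nlinarith : (0 : ℝ) ≤ ℓ ^ 2 - 1)]
  have hs : 64 ≤ s := by nlinarith
  have hN : (N : ℝ) ≤ s * ℓ := Nat.floor_le (by positivity)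
  have hN1 : s * ℓ < N + 1 := Nat.lt_floor_add_one _
  refine ⟨by rw [hsR]; nlinarith, ?_, ?_⟩
  · calc gaussErr R (N + 1) ≤ gaussErr R (s * (2 * ℓ)) :=
          gaussErr_mono hR (by positivity) (by nlinarith)
      _ = 1 / (12 * s ^ 2) + (ℓ + 16 * ℓ ^ 3) / s := by
          rw [hsR, gaussErr_sq_mul (by positivity)]; field_simp; ring
      _ ≤ 1 := by
          have h1 : 1 / (12 * s ^ 2) ≤ 1 / 4 := by
            rw [div_le_div_iff₀ (by positivity) (by norm_num)]; nlinarith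
          have h2 : (ℓ + 16 * ℓ ^ 3) / s ≤ 17 / 64 := by
            rw [div_le_iff₀ (by positivity)]; nlinarith
          linarith
  · have htail := mul_exp_neg_sq_div_le hR (by linarith) hN1.le
    have hblock : 2 * (2 * (N : ℝ) + 1) * gaussErr R N ≤ 16 * ℓ ^ 4 := by
      calc 2 * (2 * (N : ℝ) + 1) * gaussErr R N ≤ 6 * (s * ℓ) * gaussErr R (s * ℓ) := by
            have : 0 ≤ gaussErr R N := by unfold gaussErr; positivity
            exact mul_le_mul (by nlinarith) (gaussErr_mono hR (by positivity) hN) this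
              (by positivity)
        _ = ℓ / (2 * s) + 3 * ℓ ^ 2 + 12 * ℓ ^ 4 := by
            rw [hsR, gaussErr_sq_mul (by positivity)]; field_simp; ring
        _ ≤ 16 * ℓ ^ 4 := by
            have : ℓ / (2 * s) ≤ ℓ := by
              rw [div_le_iff₀ (by positivity)]; nlinarith
            nlinarith
    linarith [one_le_pow₀ (n := 4) hlog]

lemma log_pow_four_le {x ε : ℝ} (hx : 1 ≤ x) (hε : 0 < ε) :
    Real.log x ^ 4 ≤ (4 / ε) ^ 4 * x ^ ε := by
  have h := Real.log_le_rpow_div (by linarith : 0 ≤ x) (by positivity : 0 < ε / 4)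
  calc Real.log x ^ 4 ≤ (x ^ (ε / 4) / (ε / 4)) ^ 4 := by
        gcongr; exact Real.log_nonneg hx
    _ = (4 / ε) ^ 4 * x ^ ε := by
        rw [div_pow, ← Real.rpow_natCast (x ^ (ε / 4)), ← Real.rpow_mul (by linarith)]
        field_simp
        norm_num

lemma eventually_log_cube_le_sqrt :
    ∀ᶠ R : ℕ in atTop, 1 ≤ Real.log R ∧ 64 * Real.log R ^ 3 ≤ √(R : ℝ) := by
  refine (tendsto_natCast_atTop_atTop (R := ℝ)).eventually
    (p := fun x => 1 ≤ Real.log x ∧ 64 * Real.log x ^ 3 ≤ √x) ?_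
  filter_upwards [Real.tendsto_log_atTop.eventually_ge_atTop 1,
    (isLittleO_log_rpow_rpow_atTop 3 (by norm_num : (0 : ℝ) < 1 / 2)).bound
      (by norm_num : (0 : ℝ) < 1 / 64), eventually_ge_atTop 0] with x hlog hbound hx
  refine ⟨hlog, ?_⟩
  rw [Real.norm_of_nonneg (by positivity), Real.norm_of_nonneg (by positivity),
    ← Real.sqrt_eq_rpow] at hbound
  norm_cast at hbound
  linarith

lemma norm_W_le {ξ : ℕ → ℂ} {M : ℝ} (hξ : ∀ n, ‖ξ n‖ ≤ M) (R : ℕ) (θ : ℝ) :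
    ‖W ξ R θ‖ ≤ M * (4 * R + 1) := by
  have hM : 0 ≤ M := (norm_nonneg _).trans (hξ 0)
  set L := √(R : ℝ) * Real.log R
  have hL : L ≤ 2 * R := by
    rcases Nat.eq_zero_or_pos R with h | h
    · simp [L, h]
    have h1 := Real.log_le_rpow_div (R.cast_nonneg (α := ℝ)) (by norm_num : (0 : ℝ) < 1 / 2)
    rw [← Real.sqrt_eq_rpow] at h1
    calc L ≤ √(R : ℝ) * (√(R : ℝ) / (1 / 2)) := by simp only [L]; gcongr
      _ = 2 * R := by rw [mul_div_assoc', Real.mul_self_sqrt R.cast_nonneg]; ring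
  have hcard : ((Icc (-⌊L⌋) ⌊L⌋).card : ℝ) ≤ 4 * R + 1 := by
    have hL0 : 0 ≤ L := mul_nonneg (Real.sqrt_nonneg _) (Real.log_natCast_nonneg R)
    rw [Int.card_Icc, ← Int.natCast_floor_eq_floor hL0,
      show ((⌊L⌋₊ : ℤ) + 1 - -(⌊L⌋₊ : ℤ)).toNat = 2 * ⌊L⌋₊ + 1 by omega]
    push_cast
    linarith [Nat.floor_le hL0]
  refine (norm_sum_le _ _).trans ((sum_le_card_nsmul _ _ M fun n _ => ?_).trans ?_)
  · rw [norm_mul, norm_mul, norm_e, mul_one, Complex.norm_real, Real.norm_eq_abs,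
      abs_of_pos (Real.exp_pos _)]
    refine (mul_le_of_le_one_right (norm_nonneg _) (Real.exp_le_one_iff.mpr ?_)).trans (hξ _)
    exact div_nonpos_of_nonpos_of_nonneg (neg_nonpos.mpr (sq_nonneg _)) (by positivity)
  · rw [nsmul_eq_mul, mul_comm]
    exact mul_le_mul_of_nonneg_left hcard hM

lemma stirlingPeak_mul_sub_le_norm_Fxi {ξ : ℕ → ℂ} {M : ℝ} (hξ : ∀ n, ‖ξ n‖ ≤ M) {R : ℕ}
    (hlog : 1 ≤ Real.log R) (hcube : 64 * Real.log R ^ 3 ≤ √(R : ℝ)) (θ : ℝ) :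
    stirlingPeak R * (‖W ξ R θ‖ - 43 * M * Real.log R ^ 4) ≤ ‖Fxi ξ (R * e θ)‖ := by
  have hM : 0 ≤ M := (norm_nonneg _).trans (hξ 0)
  obtain ⟨hwindow, hδ, herr⟩ := floor_sqrt_mul_log_bounds hlog hcube
  have hR : (0 : ℝ) < R := by linarith [(⌊√(R : ℝ) * Real.log R⌋₊).cast_nonneg (α := ℝ)]
  have hμ := stirlingPeak_pos hR
  have hclose := norm_Fxi_sub_sum_gaussApprox_le hξ (Nat.cast_pos.mp hR) hwindow hδ θ
  have hNR : (⌊√(R : ℝ) * Real.log R⌋₊ : ℝ) ≤ R := by linarith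
  rw [sum_gaussApprox_eq_W ξ θ (by exact_mod_cast hNR)] at hclose
  have hnorm : ‖(stirlingPeak R : ℂ) * e (R * θ) * W ξ R θ‖ = stirlingPeak R * ‖W ξ R θ‖ := by
    rw [norm_mul, norm_mul, norm_e, Complex.norm_real, Real.norm_of_nonneg hμ.le, mul_one]
  have htriangle := norm_sub_norm_le ((stirlingPeak R : ℂ) * e (R * θ) * W ξ R θ) (Fxi ξ (R * e θ))
  rw [norm_sub_rev, hnorm] at htriangle
  nlinarith [mul_le_mul_of_nonneg_left herr (mul_nonneg hM hμ.le)]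

/-- Lemma 3 of the paper: for bounded `ξ` and every `ε > 0` there is `C_ε` such that
`|F_ξ(R e(θ))| ≥ μ(R)(|W_R(θ)| - C_ε R^ε)` with `μ(R) = e^R/√(2πR)`. -/
theorem stmt_3 (ξ : ℕ → ℂ) (M : ℝ) (hbdd : ∀ n, ‖ξ n‖ ≤ M) (ε : ℝ) (hε : 0 < ε) :
    ∃ C : ℝ, ∀ R : ℕ, 2 ≤ R → ∀ θ : ℝ,
      ‖Fxi ξ ((R : ℂ) * e θ)‖ ≥
        Real.exp R / Real.sqrt (2 * Real.pi * R) * (‖W ξ R θ‖ - C * (R : ℝ) ^ ε) := by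
  have hM : 0 ≤ M := (norm_nonneg _).trans (hbdd 0)
  obtain ⟨R₀, hR₀⟩ := eventually_atTop.mp eventually_log_cube_le_sqrt
  refine ⟨M * (43 * (4 / ε) ^ 4 + (4 * R₀ + 1)), fun R hR θ => ?_⟩
  have hR1 : (1 : ℝ) ≤ R := by exact_mod_cast (by omega : 1 ≤ R)
  have hμ := stirlingPeak_pos (by linarith : (0 : ℝ) < R)
  have hRε := Real.one_le_rpow hR1 hε.le
  change stirlingPeak R * _ ≤ _
  rcases lt_or_ge R R₀ with hsmall | hlarge
  · have hW : ‖W ξ R θ‖ ≤ M * (4 * R₀ + 1) := (norm_W_le hbdd R θ).trans (by gcongr)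
    have hC : M * (4 * R₀ + 1) ≤ M * (43 * (4 / ε) ^ 4 + (4 * R₀ + 1)) * R ^ ε :=
      (mul_le_mul_of_nonneg_left (le_add_of_nonneg_left (by positivity)) hM).trans
        (le_mul_of_one_le_right (by positivity) hRε)
    exact (mul_nonpos_of_nonneg_of_nonpos hμ.le (by linarith)).trans (norm_nonneg _)
  · obtain ⟨hlog, hcube⟩ := hR₀ R hlarge
    refine (mul_le_mul_of_nonneg_left ?_ hμ.le).trans
      (stirlingPeak_mul_sub_le_norm_Fxi hbdd hlog hcube θ)
    have hlog4 : 43 * Real.log R ^ 4 ≤ (43 * (4 / ε) ^ 4 + (4 * R₀ + 1)) * R ^ ε :=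
      calc 43 * Real.log R ^ 4 ≤ 43 * (4 / ε) ^ 4 * R ^ ε := by
            linarith [log_pow_four_le hR1 hε]
        _ ≤ _ := by gcongr; exact le_add_of_nonneg_right (by positivity)
    nlinarith [mul_le_mul_of_nonneg_left hlog4 hM]
end

section
/- Let f : [M₁, M₂] → ℝ be differentiable with f' monotone and f'(x) ≥ m > 0 on [M₁, M₂]. Then |∫_{M₁}^{M₂} e^{2πi f(x)} dx| ≤ 4/m. -/
/-!
Write `e(f x) = (f' x)⁻¹ • (f' x • e(f x))` with `e(y) = exp(2πiy)`. The second factor is the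
derivative of `e(f)/(2πi)`, so every tail integral `∫_t^b f' e(f)` has norm at most `1/π`. The
weight `ψ = 1/f'` is monotone, and continuous because a derivative has the intermediate value
property; Abel summation against the Stieltjes measure `dψ` (an application of Fubini) bounds the
integral by `(1/π)(|ψ a| + |ψ b - ψ a|) ≤ 2/(πm)`.
-/

open Set MeasureTheory

theorem MonotoneOn.continuousOn_of_ordConnected_image {α β : Type*} [LinearOrder α]
    [TopologicalSpace α] [OrderTopology α] [LinearOrder β] [TopologicalSpace β] [OrderTopology β]
    [DenselyOrdered β] {f : α → β} {s : Set α} [OrdConnected s] (hf : MonotoneOn f s)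
    (hfs : OrdConnected (f '' s)) : ContinuousOn f s := by
  let F : s → f '' s := fun x => ⟨f x, mem_image_of_mem f x.2⟩
  have hF : Continuous F :=
    Monotone.continuous_of_surjective (fun x y hxy => hf x.2 y.2 hxy)
      (fun ⟨_, x, hx, hxy⟩ => ⟨⟨x, hx⟩, Subtype.ext hxy⟩)
  exact continuousOn_iff_continuous_domRestrict.2 (continuous_subtype_val.comp hF)

theorem AntitoneOn.continuousOn_of_ordConnected_image {α β : Type*} [LinearOrder α]
    [TopologicalSpace α] [OrderTopology α] [LinearOrder β] [TopologicalSpace β] [OrderTopology β]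
    [DenselyOrdered β] {f : α → β} {s : Set α} [OrdConnected s] (hf : AntitoneOn f s)
    (hfs : OrdConnected (f '' s)) : ContinuousOn f s :=
  MonotoneOn.continuousOn_of_ordConnected_image (β := βᵒᵈ) hf.dual_right hfs.dual

theorem continuousOn_deriv_of_monotoneOn_or_antitoneOn {a b : ℝ} {f : ℝ → ℝ}
    (hf : ∀ x ∈ Icc a b, DifferentiableAt ℝ f x)
    (hmono : MonotoneOn (deriv f) (Icc a b) ∨ AntitoneOn (deriv f) (Icc a b)) :
    ContinuousOn (deriv f) (Icc a b) :=
  hmono.elim (·.continuousOn_of_ordConnected_image (ordConnected_Icc.image_deriv hf))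
    (·.continuousOn_of_ordConnected_image (ordConnected_Icc.image_deriv hf))

section AbelSummation

variable {E : Type*} [NormedAddCommGroup E] [NormedSpace ℝ E] [CompleteSpace E]

namespace StieltjesFunction

variable (ψ : StieltjesFunction ℝ)

instance isFiniteMeasure_restrict_Ioc (a b : ℝ) :
    IsFiniteMeasure (ψ.measure.restrict (Ioc a b)) :=
  isFiniteMeasure_restrict.2 measure_Ioc_lt_top.ne

theorem measureReal_Ioc {a b : ℝ} (hab : a ≤ b) : ψ.measure.real (Ioc a b) = ψ b - ψ a := by
  rw [measureReal_def, ψ.measure_Ioc, ENNReal.toReal_ofReal (sub_nonneg.2 (ψ.mono hab))]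

theorem setIntegral_Ioc_smul_eq {g : ℝ → E} {a b : ℝ} (hg : IntegrableOn g (Ioc a b)) :
    ∫ x in Ioc a b, ψ x • g x =
      ψ a • (∫ x in Ioc a b, g x) + ∫ t in Ioc a b, (∫ x in Ioc t b, g x) ∂ψ.measure := by
  set F : ℝ → ℝ → E := fun x t => (Ici t).indicator g x
  have hF : Integrable (Function.uncurry F)
      ((volume.restrict (Ioc a b)).prod (ψ.measure.restrict (Ioc a b))) :=
    (hg.comp_fst _).indicator (measurableSet_le measurable_snd measurable_fst)
  have h_inner_t : ∀ x ∈ Ioc a b, ∫ t in Ioc a b, F x t ∂ψ.measure = (ψ x - ψ a) • g x := by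
    intro x hx
    change ∫ t in Ioc a b, (Iic x).indicator (fun _ => g x) t ∂ψ.measure = _
    rw [setIntegral_indicator measurableSet_Iic, Ioc_inter_Iic, min_eq_right hx.2,
      setIntegral_const, ψ.measureReal_Ioc hx.1.le]
  have h_inner_x : ∀ t ∈ Ioc a b, ∫ x in Ioc a b, F x t = ∫ x in Ioc t b, g x := by
    intro t ht
    have h_cap : Ioc a b ∩ Ici t = Icc t b :=
      Set.ext fun x => ⟨fun h => ⟨h.2, h.1.2⟩, fun h => ⟨⟨ht.1.trans_le h.1, h.2⟩, h.1⟩⟩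
    rw [setIntegral_indicator measurableSet_Ici, h_cap, integral_Icc_eq_integral_Ioc]
  calc ∫ x in Ioc a b, ψ x • g x
      = ∫ x in Ioc a b, (ψ a • g x + ∫ t in Ioc a b, F x t ∂ψ.measure) := by
        refine setIntegral_congr_fun measurableSet_Ioc fun x hx => ?_
        rw [h_inner_t x hx, ← add_smul, add_sub_cancel]
    _ = ψ a • (∫ x in Ioc a b, g x) + ∫ x in Ioc a b, ∫ t in Ioc a b, F x t ∂ψ.measure := by
        rw [← integral_smul]
        exact integral_add (hg.smul _) hF.integral_prod_left
    _ = ψ a • (∫ x in Ioc a b, g x) + ∫ t in Ioc a b, (∫ x in Ioc t b, g x) ∂ψ.measure := by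
        rw [integral_integral_swap hF, setIntegral_congr_fun measurableSet_Ioc h_inner_x]

theorem norm_intervalIntegral_smul_le {g : ℝ → E} {a b C : ℝ} (hab : a ≤ b)
    (hg : IntervalIntegrable g volume a b) (hC : ∀ t ∈ Icc a b, ‖∫ x in t..b, g x‖ ≤ C) :
    ‖∫ x in a..b, ψ x • g x‖ ≤ C * (|ψ a| + (ψ b - ψ a)) := by
  have hC_Ioc : ∀ t ∈ Icc a b, ‖∫ x in Ioc t b, g x‖ ≤ C := fun t ht => by
    simpa only [intervalIntegral.integral_of_le ht.2] using hC t ht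
  rw [intervalIntegral.integral_of_le hab, ψ.setIntegral_Ioc_smul_eq hg.1]
  calc _ ≤ ‖ψ a • ∫ x in Ioc a b, g x‖ + ‖∫ t in Ioc a b, (∫ x in Ioc t b, g x) ∂ψ.measure‖ :=
        norm_add_le _ _
    _ ≤ |ψ a| * C + C * ψ.measure.real (Ioc a b) := by
        rw [norm_smul, Real.norm_eq_abs]
        gcongr
        · exact hC_Ioc a ⟨le_rfl, hab⟩
        · exact norm_setIntegral_le_of_norm_le_const measure_Ioc_lt_top
            fun t ht => hC_Ioc t (Ioc_subset_Icc_self ht)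
    _ = C * (|ψ a| + (ψ b - ψ a)) := by rw [ψ.measureReal_Ioc hab]; ring

end StieltjesFunction

theorem norm_intervalIntegral_smul_le_of_monotoneOn {ψ : ℝ → ℝ} {g : ℝ → E} {a b C : ℝ}
    (hab : a ≤ b) (hψ : MonotoneOn ψ (Icc a b)) (hψc : ContinuousOn ψ (Icc a b))
    (hg : IntervalIntegrable g volume a b) (hC : ∀ t ∈ Icc a b, ‖∫ x in t..b, g x‖ ≤ C) :
    ‖∫ x in a..b, ψ x • g x‖ ≤ C * (|ψ a| + (ψ b - ψ a)) := by
  let Ψ : StieltjesFunction ℝ :=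
    { toFun := fun x => ψ (projIcc a b hab x)
      mono' := fun x y hxy => hψ (projIcc a b hab x).2 (projIcc a b hab y).2
        (monotone_projIcc hab hxy)
      right_continuous' := fun x =>
        (hψc.comp_continuous (continuous_subtype_val.comp continuous_projIcc)
          fun y => (projIcc a b hab y).2).continuousWithinAt }
  have hΨ : ∀ x ∈ Icc a b, Ψ x = ψ x := fun x hx => by
    simp [Ψ, projIcc_of_mem hab hx]
  have h := Ψ.norm_intervalIntegral_smul_le hab hg hC
  rwa [intervalIntegral.integral_congr fun x hx => by rw [hΨ x (uIcc_of_le hab ▸ hx)],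
    hΨ a (left_mem_Icc.2 hab), hΨ b (right_mem_Icc.2 hab)] at h

theorem norm_intervalIntegral_smul_le_of_antitoneOn {ψ : ℝ → ℝ} {g : ℝ → E} {a b C : ℝ}
    (hab : a ≤ b) (hψ : AntitoneOn ψ (Icc a b)) (hψc : ContinuousOn ψ (Icc a b))
    (hg : IntervalIntegrable g volume a b) (hC : ∀ t ∈ Icc a b, ‖∫ x in t..b, g x‖ ≤ C) :
    ‖∫ x in a..b, ψ x • g x‖ ≤ C * (|ψ a| + (ψ a - ψ b)) := by
  have h := norm_intervalIntegral_smul_le_of_monotoneOn hab hψ.neg hψc.neg hg hC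
  simp only [neg_smul, intervalIntegral.integral_neg, norm_neg, abs_neg] at h
  linarith

theorem norm_intervalIntegral_smul_le_of_monotoneOn_or_antitoneOn {ψ : ℝ → ℝ} {g : ℝ → E}
    {a b B C : ℝ} (hab : a ≤ b) (hψ : MonotoneOn ψ (Icc a b) ∨ AntitoneOn ψ (Icc a b))
    (hψc : ContinuousOn ψ (Icc a b)) (hψB : ∀ x ∈ Icc a b, 0 ≤ ψ x ∧ ψ x ≤ B)
    (hg : IntervalIntegrable g volume a b) (hC : ∀ t ∈ Icc a b, ‖∫ x in t..b, g x‖ ≤ C) :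
    ‖∫ x in a..b, ψ x • g x‖ ≤ C * (2 * B) := by
  have hC_nonneg : 0 ≤ C := (norm_nonneg _).trans (hC b ⟨hab, le_rfl⟩)
  obtain ⟨ha_nonneg, haB⟩ := hψB a (left_mem_Icc.2 hab)
  obtain ⟨hb_nonneg, hbB⟩ := hψB b (right_mem_Icc.2 hab)
  rcases hψ with h | h
  · refine (norm_intervalIntegral_smul_le_of_monotoneOn hab h hψc hg hC).trans ?_
    rw [abs_of_nonneg ha_nonneg]
    gcongr
    linarith
  · refine (norm_intervalIntegral_smul_le_of_antitoneOn hab h hψc hg hC).trans ?_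
    rw [abs_of_nonneg ha_nonneg]
    gcongr
    linarith

end AbelSummation

open Complex Real in
theorem norm_intervalIntegral_smul_cexp_le {f f' : ℝ → ℝ} {a b : ℝ}
    (hf : ∀ x ∈ uIcc a b, HasDerivAt f (f' x) x) (hf' : IntervalIntegrable f' volume a b) :
    ‖∫ x in a..b, f' x • cexp (2 * π * I * f x)‖ ≤ 1 / π := by
  have hc : (2 * π * I : ℂ) ≠ 0 := by simp [Real.pi_ne_zero]
  have h_norm : ∀ y : ℝ, ‖cexp (2 * π * I * y) / (2 * π * I)‖ = 1 / (2 * π) := fun y => by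
    rw [norm_div, show (2 * π * I * y : ℂ) = ↑(2 * π * y) * I by push_cast; ring,
      norm_exp_ofReal_mul_I]
    simp [abs_of_pos Real.pi_pos]
  have h_deriv : ∀ x ∈ uIcc a b, HasDerivAt (fun y => cexp (2 * π * I * f y) / (2 * π * I))
      (f' x • cexp (2 * π * I * f x)) x := fun x hx => by
    refine (((hf x hx).ofReal_comp.const_mul (2 * π * I)).cexp.div_const (2 * π * I)).congr_deriv ?_
    rw [real_smul]
    field_simp
  have h_cont : ContinuousOn (fun x => cexp (2 * π * I * f x)) (uIcc a b) :=
    continuous_exp.comp_continuousOn (continuousOn_const.mul (continuous_ofReal.comp_continuousOn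
      fun x hx => (hf x hx).continuousAt.continuousWithinAt))
  rw [intervalIntegral.integral_eq_sub_of_hasDerivAt h_deriv (hf'.smul_continuousOn h_cont)]
  calc _ ≤ 1 / (2 * π) + 1 / (2 * π) := (norm_sub_le _ _).trans (by rw [h_norm, h_norm])
    _ = 1 / π := by ring

/-- First-derivative (van der Corput) estimate for oscillatory integrals: if `f` is
differentiable on `[M₁, M₂]` with monotone derivative satisfying `f' ≥ m > 0` there, then
`|∫_{M₁}^{M₂} e^{2πi f(x)} dx| ≤ 4/m`. -/
theorem stmt_6 (M₁ M₂ : ℝ) (hM : M₁ < M₂) (f : ℝ → ℝ)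
    (hf : ∀ x ∈ Set.Icc M₁ M₂, DifferentiableAt ℝ f x)
    (hmono : MonotoneOn (deriv f) (Set.Icc M₁ M₂) ∨ AntitoneOn (deriv f) (Set.Icc M₁ M₂))
    (m : ℝ) (hm : 0 < m) (hlb : ∀ x ∈ Set.Icc M₁ M₂, m ≤ deriv f x) :
    ‖∫ x in M₁..M₂, Complex.exp (2 * Real.pi * Complex.I * (f x : ℂ))‖ ≤ 4 / m := by
  set d := deriv f
  set g : ℝ → ℂ := fun x => d x • Complex.exp (2 * Real.pi * Complex.I * f x)
  have hd : ContinuousOn d (Icc M₁ M₂) := continuousOn_deriv_of_monotoneOn_or_antitoneOn hf hmono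
  have hd_pos : ∀ x ∈ Icc M₁ M₂, 0 < d x := fun x hx => hm.trans_le (hlb x hx)
  have hf_cont : ContinuousOn f (Icc M₁ M₂) := fun x hx => (hf x hx).continuousAt.continuousWithinAt
  have hg : IntervalIntegrable g volume M₁ M₂ :=
    (hd.smul (by fun_prop)).intervalIntegrable_of_Icc hM.le
  have hC : ∀ t ∈ Icc M₁ M₂, ‖∫ x in t..M₂, g x‖ ≤ 1 / Real.pi := fun t ht =>
    have hsub := uIcc_subset_Icc ht (right_mem_Icc.2 hM.le)
    norm_intervalIntegral_smul_cexp_le (fun x hx => (hf x (hsub hx)).hasDerivAt)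
      (hd.mono hsub).intervalIntegrable
  have hψ : MonotoneOn (fun x => (d x)⁻¹) (Icc M₁ M₂) ∨ AntitoneOn (fun x => (d x)⁻¹) (Icc M₁ M₂) :=
    hmono.symm.imp (fun h x hx y hy hxy => inv_anti₀ (hd_pos y hy) (h hx hy hxy))
      (fun h x hx y hy hxy => inv_anti₀ (hd_pos x hx) (h hx hy hxy))
  have hψB : ∀ x ∈ Icc M₁ M₂, 0 ≤ (d x)⁻¹ ∧ (d x)⁻¹ ≤ 1 / m := fun x hx =>
    ⟨(inv_pos.2 (hd_pos x hx)).le, one_div m ▸ inv_anti₀ hm (hlb x hx)⟩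
  calc _ = ‖∫ x in M₁..M₂, (d x)⁻¹ • g x‖ := by
        rw [intervalIntegral.integral_congr fun x hx =>
          inv_smul_smul₀ (hd_pos x (uIcc_of_le hM.le ▸ hx)).ne' _]
    _ ≤ 1 / Real.pi * (2 * (1 / m)) := norm_intervalIntegral_smul_le_of_monotoneOn_or_antitoneOn
        hM.le hψ (hd.inv₀ fun x hx => (hd_pos x hx).ne') hψB hg hC
    _ ≤ 4 / m := by
        have := Real.pi_gt_three
        field_simp
        nlinarith
end

section
/- Let ξ : ℤ₊ → ℂ be a wide-sense stationary sequence with spectral measure ρ on the circle, i.e. E[ξ(n₁) conj(ξ(n₂))] = ρ̂(n₂ − n₁) = ∫_{−π}^{π} e^{−i(n₂−n₁)t} dρ(t), where ρ is a finite nonnegative measure. Then for every r > 0 and θ ∈ [−π, π], E|F_ξ(r e^{iθ})|² = ∫_{−π}^{π} e^{2r cos(θ+t)} dρ(t), where F_ξ(z) = ∑_{n≥0} ξ(n) z^n/n!. -/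
/-!
Both sides are instances of one identity: if the `f n` have uniformly bounded second moments and
`∑ ‖c n‖ < ∞`, then `E|∑ c n f n|² = ∑_{m,n} c m conj (c n) E[f m conj (f n)]`, the exchange of sum
and integral being justified by `2 |f m| |f n| ≤ |f m|² + |f n|²`. Applied to `ξ` on `Ω` and to
`t ↦ e^{int}` on `([-π, π], ρ)`, the two covariance kernels agree by the spectral hypothesis, and
`∑ zⁿ e^{int} / n! = exp (z e^{it})` has squared modulus `e^{2 r cos (θ + t)}` for `z = r e^{iθ}`.
-/

open MeasureTheory Complex
open scoped ENNReal ComplexConjugate Nat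

section SecondMoment

variable {Ω : Type*} [MeasurableSpace Ω] {μ : Measure Ω}

lemma two_mul_enorm_mul_le {E : Type*} [NormedAddCommGroup E] (x y : E) :
    2 * (‖x‖ₑ * ‖y‖ₑ) ≤ ‖x‖ₑ ^ 2 + ‖y‖ₑ ^ 2 := by
  simp only [enorm_eq_nnnorm, ← mul_assoc]
  exact_mod_cast two_mul_le_add_sq ‖x‖₊ ‖y‖₊

lemma lintegral_enorm_mul_le_of_lintegral_enorm_sq_le {E : Type*} [NormedAddCommGroup E]
    {f g : Ω → E} (hf : AEStronglyMeasurable f μ) {C : ℝ≥0∞}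
    (hfC : ∫⁻ ω, ‖f ω‖ₑ ^ 2 ∂μ ≤ C) (hgC : ∫⁻ ω, ‖g ω‖ₑ ^ 2 ∂μ ≤ C) :
    ∫⁻ ω, ‖f ω‖ₑ * ‖g ω‖ₑ ∂μ ≤ C := by
  have : 2 * ∫⁻ ω, ‖f ω‖ₑ * ‖g ω‖ₑ ∂μ ≤ 2 * C :=
    calc 2 * ∫⁻ ω, ‖f ω‖ₑ * ‖g ω‖ₑ ∂μ = ∫⁻ ω, 2 * (‖f ω‖ₑ * ‖g ω‖ₑ) ∂μ :=
          (lintegral_const_mul' _ _ ENNReal.ofNat_ne_top).symm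
      _ ≤ ∫⁻ ω, ‖f ω‖ₑ ^ 2 + ‖g ω‖ₑ ^ 2 ∂μ := lintegral_mono fun ω => two_mul_enorm_mul_le _ _
      _ = ∫⁻ ω, ‖f ω‖ₑ ^ 2 ∂μ + ∫⁻ ω, ‖g ω‖ₑ ^ 2 ∂μ :=
          lintegral_add_left' (hf.enorm.pow_const 2) _
      _ ≤ 2 * C := by rw [two_mul]; gcongr
  exact (ENNReal.mul_le_mul_iff_right two_ne_zero ENNReal.ofNat_ne_top).mp this

lemma ENNReal.tsum_prod_mul_self {ι : Type*} (f : ι → ℝ≥0∞) :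
    ∑' p : ι × ι, f p.1 * f p.2 = (∑' i, f i) * ∑' i, f i := by
  rw [ENNReal.tsum_prod', ← ENNReal.tsum_mul_right]
  simp only [ENNReal.tsum_mul_left]

lemma ae_summable_norm_of_tsum_lintegral_enorm_mul_ne_top {ι E : Type*} [Countable ι]
    [NormedAddCommGroup E] {a : ι → Ω → E} (ha : ∀ i, AEStronglyMeasurable (a i) μ)
    (h : ∑' p : ι × ι, ∫⁻ ω, ‖a p.1 ω‖ₑ * ‖a p.2 ω‖ₑ ∂μ ≠ ∞) :
    ∀ᵐ ω ∂μ, Summable fun i => ‖a i ω‖ := by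
  have hmeas : ∀ p : ι × ι, AEMeasurable (fun ω => ‖a p.1 ω‖ₑ * ‖a p.2 ω‖ₑ) μ := fun p =>
    (ha p.1).enorm.mul (ha p.2).enorm
  rw [← lintegral_tsum hmeas] at h
  filter_upwards [ae_lt_top' (AEMeasurable.tsum hmeas) h] with ω hω
  rw [ENNReal.tsum_prod_mul_self fun i => ‖a i ω‖ₑ, ENNReal.mul_self_lt_top_iff] at hω
  exact tsum_enorm_ne_top_iff_summable_norm.mp hω.ne

theorem ofReal_integral_norm_tsum_sq {𝕜 : Type*} [RCLike 𝕜] {f : ℕ → Ω → 𝕜} {c : ℕ → 𝕜}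
    {C : ℝ≥0∞} (hf : ∀ n, AEStronglyMeasurable (f n) μ) (hfC : ∀ n, ∫⁻ ω, ‖f n ω‖ₑ ^ 2 ∂μ ≤ C)
    (hC : C ≠ ∞) (hc : Summable fun n => ‖c n‖) :
    ((∫ ω, ‖∑' n, c n * f n ω‖ ^ 2 ∂μ : ℝ) : 𝕜) =
      ∑' p : ℕ × ℕ, c p.1 * conj (c p.2) * ∫ ω, f p.1 ω * conj (f p.2 ω) ∂μ := by
  set a : ℕ → Ω → 𝕜 := fun n ω => c n * f n ω
  have ha : ∀ n, AEStronglyMeasurable (a n) μ := fun n => (hf n).const_mul (c n)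
  have hterm : ∀ p : ℕ × ℕ, ∫⁻ ω, ‖a p.1 ω‖ₑ * ‖a p.2 ω‖ₑ ∂μ ≤ ‖c p.1‖ₑ * ‖c p.2‖ₑ * C := by
    intro p
    calc ∫⁻ ω, ‖a p.1 ω‖ₑ * ‖a p.2 ω‖ₑ ∂μ
        = ‖c p.1‖ₑ * ‖c p.2‖ₑ * ∫⁻ ω, ‖f p.1 ω‖ₑ * ‖f p.2 ω‖ₑ ∂μ := by
          rw [← lintegral_const_mul' _ _ (by finiteness)]
          refine lintegral_congr fun ω => ?_
          simp only [a, enorm_mul]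
          ring
      _ ≤ ‖c p.1‖ₑ * ‖c p.2‖ₑ * C := by
          gcongr
          exact lintegral_enorm_mul_le_of_lintegral_enorm_sq_le (hf p.1) (hfC p.1) (hfC p.2)
  have hsum : ∑' p : ℕ × ℕ, ∫⁻ ω, ‖a p.1 ω‖ₑ * ‖a p.2 ω‖ₑ ∂μ ≠ ∞ := by
    refine ne_top_of_le_ne_top ?_ (ENNReal.tsum_le_tsum hterm)
    rw [ENNReal.tsum_mul_right, ENNReal.tsum_prod_mul_self fun n => ‖c n‖ₑ]
    have hc' := tsum_enorm_ne_top_iff_summable_norm.mpr hc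
    exact ENNReal.mul_ne_top (ENNReal.mul_ne_top hc' hc') hC
  have hsq : ∀ᵐ ω ∂μ, ((‖∑' n, a n ω‖ ^ 2 : ℝ) : 𝕜) = ∑' p : ℕ × ℕ, a p.1 ω * conj (a p.2 ω) := by
    filter_upwards [ae_summable_norm_of_tsum_lintegral_enorm_mul_ne_top ha hsum] with ω hω
    rw [RCLike.ofReal_pow, ← RCLike.mul_conj, RCLike.conj_tsum, tsum_mul_tsum_of_summable_norm hω]
    simpa only [RCLike.norm_conj] using hω
  calc ((∫ ω, ‖∑' n, a n ω‖ ^ 2 ∂μ : ℝ) : 𝕜)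
      = ∫ ω, ∑' p : ℕ × ℕ, a p.1 ω * conj (a p.2 ω) ∂μ :=
        integral_ofReal.symm.trans (integral_congr_ae hsq)
    _ = ∑' p : ℕ × ℕ, ∫ ω, a p.1 ω * conj (a p.2 ω) ∂μ := by
        refine integral_tsum (fun p => (ha p.1).mul (ha p.2).star) ?_
        simpa only [enorm_mul, RCLike.enorm_conj] using hsum
    _ = _ := by
        refine tsum_congr fun p => ?_
        rw [← integral_const_mul]
        refine integral_congr_ae (ae_of_all _ fun ω => ?_)
        simp only [a, map_mul]
        ring

lemma MeasureTheory.MemLp.ofReal_re_integral_mul_conj {𝕜 : Type*} [RCLike 𝕜] {f : Ω → 𝕜}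
    (hf : MemLp f 2 μ) :
    ENNReal.ofReal (RCLike.re (∫ ω, f ω * conj (f ω) ∂μ)) = ∫⁻ ω, ‖f ω‖ₑ ^ 2 ∂μ := by
  have hint : Integrable (fun ω => ‖f ω‖ ^ 2) μ := hf.integrable_norm_pow two_ne_zero
  simp_rw [RCLike.mul_conj, ← RCLike.ofReal_pow, integral_ofReal, RCLike.ofReal_re,
    ofReal_integral_eq_lintegral_ofReal hint (ae_of_all _ fun ω => by positivity),
    ENNReal.ofReal_pow (norm_nonneg _), ofReal_norm]

end SecondMoment

lemma Complex.summable_norm_pow_div_factorial (z : ℂ) :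
    Summable fun n : ℕ => ‖z ^ n / (n ! : ℂ)‖ := by
  simpa only [norm_div, norm_pow, norm_natCast] using Real.summable_pow_div_factorial ‖z‖

lemma Complex.lintegral_enorm_exp_mul_I_sq (ρ : Measure ℝ) (n : ℕ) :
    ∫⁻ t, ‖cexp (n * t * I)‖ₑ ^ 2 ∂ρ = ρ Set.univ := by
  have hone : ∀ t : ℝ, ‖cexp (n * t * I)‖ₑ = 1 := fun t => by
    rw [← enorm_norm, ← ofReal_natCast, ← ofReal_mul, norm_exp_ofReal_mul_I, enorm_one]
  simp [hone]

lemma Complex.tsum_pow_div_factorial_mul_exp_mul_I (z : ℂ) (t : ℝ) :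
    ∑' n : ℕ, z ^ n / (n ! : ℂ) * cexp (n * t * I) = cexp (z * cexp (t * I)) := by
  have hexp := NormedSpace.expSeries_div_hasSum_exp (z * cexp (t * I))
  rw [← exp_eq_exp_ℂ] at hexp
  refine (tsum_congr fun n => ?_).trans hexp.tsum_eq
  rw [mul_pow, ← exp_nat_mul, div_mul_eq_mul_div, mul_assoc]

lemma Complex.exp_mul_I_mul_conj_exp_mul_I (m n : ℕ) (t : ℝ) :
    cexp (m * t * I) * conj (cexp (n * t * I)) = cexp (-((n : ℝ) - (m : ℝ)) * t * I) := by
  rw [← exp_conj, ← exp_add]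
  congr 1
  simp only [map_mul, conj_natCast, conj_ofReal, conj_I]
  push_cast
  ring

lemma Complex.norm_exp_mul_exp_mul_I_sq (r θ t : ℝ) :
    ‖cexp (r * cexp (θ * I) * cexp (t * I))‖ ^ 2 = Real.exp (2 * r * Real.cos (θ + t)) := by
  rw [norm_exp, ← Real.exp_nat_mul, mul_assoc, ← exp_add, ← add_mul, ← ofReal_add,
    re_ofReal_mul, exp_ofReal_mul_I_re]
  push_cast
  ring_nf

theorem stmt_9_general {Ω : Type*} [MeasurableSpace Ω] (μ : Measure Ω)
    (ξ : ℕ → Ω → ℂ) (hL2 : ∀ n, MemLp (ξ n) 2 μ)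
    (ρ : Measure ℝ) [IsFiniteMeasure ρ]
    (hspec : ∀ n₁ n₂ : ℕ,
      ∫ ω, ξ n₁ ω * (starRingEnd ℂ) (ξ n₂ ω) ∂μ =
        ∫ t in Set.Icc (-Real.pi) Real.pi,
          Complex.exp (-((n₂ : ℝ) - (n₁ : ℝ)) * t * Complex.I) ∂ρ) :
    ∀ r : ℝ, 0 < r → ∀ θ ∈ Set.Icc (-Real.pi) Real.pi,
      ∫ ω, ‖∑' n : ℕ, ξ n ω * ((r : ℂ) * Complex.exp (θ * Complex.I)) ^ n /
          (Nat.factorial n)‖ ^ 2 ∂μ =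
        ∫ t in Set.Icc (-Real.pi) Real.pi, Real.exp (2 * r * Real.cos (θ + t)) ∂ρ := by
  intro r _ θ _
  set S := Set.Icc (-Real.pi) Real.pi
  set z : ℂ := r * cexp (θ * Complex.I)
  have hξ : ∀ n, ∫⁻ ω, ‖ξ n ω‖ₑ ^ 2 ∂μ ≤ ρ S := by
    intro n
    rw [← (hL2 n).ofReal_re_integral_mul_conj, hspec]
    simp
  have hη : ∀ n : ℕ, ∫⁻ t in S, ‖cexp (n * t * Complex.I)‖ₑ ^ 2 ∂ρ ≤ ρ S := fun n => by
    rw [lintegral_enorm_exp_mul_I_sq, Measure.restrict_apply_univ]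
  apply ofReal_injective
  calc ((∫ ω, ‖∑' n : ℕ, ξ n ω * z ^ n / (n ! : ℂ)‖ ^ 2 ∂μ : ℝ) : ℂ)
      = ∑' p : ℕ × ℕ, z ^ p.1 / (p.1 ! : ℂ) * conj (z ^ p.2 / (p.2 ! : ℂ)) *
          ∫ ω, ξ p.1 ω * conj (ξ p.2 ω) ∂μ := by
        refine (congrArg _ (integral_congr_ae (ae_of_all _ fun ω => ?_))).trans
          (ofReal_integral_norm_tsum_sq (fun n => (hL2 n).1) hξ (measure_ne_top ρ S)
            (summable_norm_pow_div_factorial z))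
        simp only [div_mul_eq_mul_div, mul_comm (ξ _ ω)]
    _ = ∑' p : ℕ × ℕ, z ^ p.1 / (p.1 ! : ℂ) * conj (z ^ p.2 / (p.2 ! : ℂ)) *
          ∫ t in S, cexp (p.1 * t * Complex.I) * conj (cexp (p.2 * t * Complex.I)) ∂ρ := by
        simp only [hspec, exp_mul_I_mul_conj_exp_mul_I]
    _ = ((∫ t in S, ‖∑' n : ℕ, z ^ n / (n ! : ℂ) * cexp (n * t * Complex.I)‖ ^ 2 ∂ρ : ℝ) : ℂ) :=
        (ofReal_integral_norm_tsum_sq (fun n => by fun_prop) hη (measure_ne_top ρ S)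
          (summable_norm_pow_div_factorial z)).symm
    _ = ((∫ t in S, Real.exp (2 * r * Real.cos (θ + t)) ∂ρ : ℝ) : ℂ) := by
        simp only [tsum_pow_div_factorial_mul_exp_mul_I, z, norm_exp_mul_exp_mul_I_sq]

/-- Lemma 8.1 of the paper: for a wide-sense stationary sequence `ξ` with spectral
measure `ρ` (i.e. `E[ξ(n₁) conj(ξ(n₂))] = ∫_{-π}^{π} e^{-i(n₂-n₁)t} dρ(t)`),
`E|F_ξ(re^{iθ})|² = ∫_{-π}^{π} e^{2r cos(θ+t)} dρ(t)`, where `F_ξ(z) = ∑ ξ(n) z^n/n!`. -/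
theorem stmt_9 {Ω : Type*} [MeasurableSpace Ω] (μ : Measure Ω) [IsProbabilityMeasure μ]
    (ξ : ℕ → Ω → ℂ) (hmeas : ∀ n, Measurable (ξ n)) (hL2 : ∀ n, MemLp (ξ n) 2 μ)
    (ρ : Measure ℝ) [IsFiniteMeasure ρ] (hρsupp : ρ (Set.Icc (-Real.pi) Real.pi)ᶜ = 0)
    (hspec : ∀ n₁ n₂ : ℕ,
      ∫ ω, ξ n₁ ω * (starRingEnd ℂ) (ξ n₂ ω) ∂μ =
        ∫ t in Set.Icc (-Real.pi) Real.pi,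
          Complex.exp (-((n₂ : ℝ) - (n₁ : ℝ)) * t * Complex.I) ∂ρ) :
    ∀ r : ℝ, 0 < r → ∀ θ ∈ Set.Icc (-Real.pi) Real.pi,
      ∫ ω, ‖∑' n : ℕ, ξ n ω * ((r : ℂ) * Complex.exp (θ * Complex.I)) ^ n /
          (Nat.factorial n)‖ ^ 2 ∂μ =
        ∫ t in Set.Icc (-Real.pi) Real.pi, Real.exp (2 * r * Real.cos (θ + t)) ∂ρ :=
  stmt_9_general μ ξ hL2 ρ hspec
end

section
/- Let r : ℕ → [0,1] satisfy r(t) = O((log t)^{−(1+2ε)}) for some ε > 0. Then for R → ∞, ∑_{ℓ ≥ 1} r(⌊ℓ/4⌋) e^{−ℓ²/(8R)} = O(√R / (log R)^{1+ε}). -/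
open Real Filter Finset Topology

/-!
Split the sum at `ℓ ≈ 4 R^{1/4}` and at `L = √R (log R)^ε`. The terms below `4 R^{1/4}` are at
most `1`. Beyond it `⌊(ℓ+1)/4⌋ ≥ R^{1/4}`, so `r(⌊(ℓ+1)/4⌋) ≲ (log R)^{-(1+2ε)}`, and there are
at most `L` such terms below `L`, contributing `≲ √R (log R)^{-(1+ε)}`. Past `L` the Gaussian
factor is dominated by `e^{-L²/(8R)}` times a geometric series of ratio `e^{-L/(4R)}`, which sums
to `≲ √R e^{-(log R)^{2ε}/8}`; this decays faster than any power of `log R`.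
-/

lemma inv_one_sub_exp_neg_le {a : ℝ} (ha : 0 < a) : (1 - exp (-a))⁻¹ ≤ 1 + a⁻¹ := by
  have hexp : a ≤ exp a - 1 := by linarith [add_one_le_exp a]
  have hpos : exp a - 1 ≠ 0 := (ha.trans_le hexp).ne'
  calc (1 - exp (-a))⁻¹ = 1 + (exp a - 1)⁻¹ := by
        rw [exp_neg]; field_simp; ring
    _ ≤ 1 + a⁻¹ := by gcongr

lemma exp_neg_sq_div_le_mul_geometric {s L x : ℝ} (hs : 0 < s) (hL : 0 ≤ L) (i : ℕ)
    (hx : L + i ≤ x) : exp (-x ^ 2 / s) ≤ exp (-L ^ 2 / s) * exp (-(2 * L / s)) ^ i := by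
  have hsq : L ^ 2 + 2 * L * i ≤ x ^ 2 := by
    nlinarith [mul_nonneg hL (Nat.cast_nonneg (α := ℝ) i), sq_nonneg (i : ℝ)]
  rw [← exp_nat_mul, ← exp_add, exp_le_exp,
    show -L ^ 2 / s + i * -(2 * L / s) = -(L ^ 2 + 2 * L * i) / s by ring]
  gcongr

lemma summable_of_le_exp_neg_sq_div {f : ℕ → ℝ} {s : ℝ} (hf0 : ∀ i, 0 ≤ f i) (hs : 0 < s)
    (hf : ∀ i, f i ≤ exp (-((i : ℝ) + 1) ^ 2 / s)) : Summable f := by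
  refine .of_nonneg_of_le hf0 (fun i ↦ (hf i).trans <|
    exp_neg_sq_div_le_mul_geometric hs zero_le_one i (add_comm _ _).le) <|
    (summable_geometric_of_lt_one (exp_nonneg _) ?_).mul_left _
  rw [exp_lt_one_iff, neg_lt_zero]
  positivity

lemma tsum_nat_add_le_of_le_exp_neg_sq_div {f : ℕ → ℝ} {s L : ℝ} (hf0 : ∀ i, 0 ≤ f i)
    (hs : 0 < s) (hL : 0 < L) (hf : ∀ i, f i ≤ exp (-((i : ℝ) + 1) ^ 2 / s)) {N : ℕ}
    (hN : L ≤ N + 1) : ∑' i, f (i + N) ≤ exp (-L ^ 2 / s) * (1 + s / (2 * L)) := by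
  set q := exp (-(2 * L / s))
  have hq1 : q < 1 := by rw [exp_lt_one_iff, neg_lt_zero]; positivity
  have hgeom := summable_geometric_of_lt_one (exp_nonneg _) hq1
  have hle : ∀ i, f (i + N) ≤ exp (-L ^ 2 / s) * q ^ i := fun i ↦
    (hf _).trans <| exp_neg_sq_div_le_mul_geometric hs hL.le i (by push_cast; linarith)
  calc ∑' i, f (i + N) ≤ ∑' i, exp (-L ^ 2 / s) * q ^ i :=
        Summable.tsum_le_tsum hle (.of_nonneg_of_le (fun i ↦ hf0 _) hle (hgeom.mul_left _))
          (hgeom.mul_left _)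
    _ = exp (-L ^ 2 / s) * (1 - q)⁻¹ := by
        rw [tsum_mul_left, tsum_geometric_of_lt_one (exp_nonneg _) hq1]
    _ ≤ exp (-L ^ 2 / s) * (1 + s / (2 * L)) := by
        gcongr
        simpa using inv_one_sub_exp_neg_le (a := 2 * L / s) (by positivity)

lemma tsum_le_add_mul_add_tsum_nat_add {f : ℕ → ℝ} (hf : Summable f) (hf1 : ∀ i, f i ≤ 1)
    {N₁ N₂ : ℕ} {B : ℝ} (hB : 0 ≤ B) (hfB : ∀ i, N₁ ≤ i → f i ≤ B) :
    ∑' i, f i ≤ N₁ + N₂ * B + ∑' i, f (i + N₂) := by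
  rw [← hf.sum_add_tsum_nat_add N₂, ← sum_range_add_sum_Ico f (min_le_right N₁ N₂)]
  gcongr
  · calc ∑ i ∈ range (min N₁ N₂), f i ≤ #(range (min N₁ N₂)) • (1 : ℝ) :=
          sum_le_card_nsmul _ _ _ fun i _ ↦ hf1 i
      _ ≤ N₁ := by simp
  · calc ∑ i ∈ Ico (min N₁ N₂) N₂, f i ≤ #(Ico (min N₁ N₂) N₂) • B :=
          sum_le_card_nsmul _ _ _ fun i hi ↦ hfB i ?_
      _ ≤ N₂ * B := by
          rw [nsmul_eq_mul, Nat.card_Ico]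
          gcongr
          exact_mod_cast Nat.sub_le _ _
    rw [mem_Ico, min_le_iff] at hi
    omega

lemma le_mul_div_log_rpow_of_le_rpow {r : ℕ → ℝ} {C p : ℝ} (hp : 0 ≤ p)
    (hdecay : ∀ t : ℕ, 2 ≤ t → r t ≤ C / log t ^ p) (hC : 0 ≤ C) {x k : ℝ} (hx : 1 < x)
    (hk : 0 < k) {t : ℕ} (ht : x ≤ (t : ℝ) ^ k) : r t ≤ C * k ^ p / log x ^ p := by
  have ht1 : 1 < (t : ℝ) := by
    by_contra! h
    have := rpow_le_one (Nat.cast_nonneg t) h hk.le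
    linarith
  have hlog : log x ≤ k * log t := by
    rw [← log_rpow (by linarith)]
    exact log_le_log (by linarith) ht
  have hlogx : 0 < log x := log_pos hx
  calc r t ≤ C / log t ^ p := hdecay t (by exact_mod_cast ht1)
    _ ≤ C / (log x / k) ^ p := by
        gcongr
        rw [div_le_iff₀ hk]; linarith
    _ = C * k ^ p / log x ^ p := by
        rw [div_rpow hlogx.le hk.le]; field_simp

noncomputable def correlationSum (r : ℕ → ℝ) (R : ℝ) : ℝ :=
  ∑' ℓ : ℕ, r ((ℓ + 1) / 4) * exp (-((ℓ : ℝ) + 1) ^ 2 / (8 * R))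

lemma correlationSum_le {r : ℕ → ℝ} (hr : ∀ t, r t ∈ Set.Icc (0 : ℝ) 1) {C p : ℝ} (hp : 0 ≤ p)
    (hdecay : ∀ t : ℕ, 2 ≤ t → r t ≤ C / log t ^ p) (hC : 0 ≤ C) {R L : ℝ} (hR : 1 < R)
    (hL : 0 < L) :
    correlationSum r R ≤ 8 * R ^ (4⁻¹ : ℝ) + L * (C * 4 ^ p / log R ^ p) +
      exp (-L ^ 2 / (8 * R)) * (1 + 8 * R / (2 * L)) := by
  set f : ℕ → ℝ := fun ℓ ↦ r ((ℓ + 1) / 4) * exp (-((ℓ : ℝ) + 1) ^ 2 / (8 * R))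
  have hs : 0 < 8 * R := by positivity
  have hexp1 : ∀ ℓ : ℕ, exp (-((ℓ : ℝ) + 1) ^ 2 / (8 * R)) ≤ 1 := fun ℓ ↦ by
    rw [exp_le_one_iff, neg_div, neg_nonpos]; positivity
  have hf0 : ∀ ℓ, 0 ≤ f ℓ := fun ℓ ↦ mul_nonneg (hr _).1 (exp_nonneg _)
  have hf1 : ∀ ℓ, f ℓ ≤ 1 := fun ℓ ↦ mul_le_one₀ (hr _).2 (exp_nonneg _) (hexp1 ℓ)
  have hf : ∀ ℓ, f ℓ ≤ exp (-((ℓ : ℝ) + 1) ^ 2 / (8 * R)) := fun ℓ ↦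
    mul_le_of_le_one_left (exp_nonneg _) (hr _).2
  set T := ⌈R ^ (4⁻¹ : ℝ)⌉₊
  have hmid : ∀ ℓ, 4 * T ≤ ℓ → f ℓ ≤ C * 4 ^ p / log R ^ p := by
    intro ℓ hℓ
    have ht : R ≤ (((ℓ + 1) / 4 : ℕ) : ℝ) ^ (4 : ℝ) := by
      rw [← rpow_inv_le_iff_of_pos (by linarith) (Nat.cast_nonneg _) (by norm_num)]
      exact (Nat.le_ceil _).trans (Nat.cast_le.2 (by omega))
    exact (mul_le_of_le_one_right (hr _).1 (hexp1 ℓ)).trans <|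
      le_mul_div_log_rpow_of_le_rpow hp hdecay hC hR (by norm_num) ht
  have hT : (4 * T : ℕ) ≤ 8 * R ^ (4⁻¹ : ℝ) := by
    have h1 : 1 ≤ R ^ (4⁻¹ : ℝ) := one_le_rpow hR.le (by norm_num)
    have h2 : (T : ℝ) < R ^ (4⁻¹ : ℝ) + 1 := Nat.ceil_lt_add_one (zero_le_one.trans h1)
    push_cast
    linarith
  have hB : 0 ≤ C * 4 ^ p / log R ^ p := by have := log_pos hR; positivity
  calc correlationSum r R
      ≤ (4 * T : ℕ) + ⌊L⌋₊ * (C * 4 ^ p / log R ^ p) + ∑' i, f (i + ⌊L⌋₊) :=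
        tsum_le_add_mul_add_tsum_nat_add (summable_of_le_exp_neg_sq_div hf0 hs hf) hf1 hB hmid
    _ ≤ _ := by
        gcongr ?_ + ?_ * _ + ?_
        · exact Nat.floor_le hL.le
        · exact tsum_nat_add_le_of_le_exp_neg_sq_div hf0 hs hL hf (Nat.lt_floor_add_one L).le

lemma tendsto_log_rpow_mul_exp_neg_mul_log_rpow {a c : ℝ} (ha : 0 < a) (hc : 0 < c) (b : ℝ) :
    Tendsto (fun x ↦ log x ^ b * exp (-c * log x ^ a)) atTop (𝓝 0) := by
  have hv : Tendsto (fun x ↦ log x ^ a) atTop atTop :=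
    (tendsto_rpow_atTop ha).comp tendsto_log_atTop
  refine ((tendsto_rpow_mul_exp_neg_mul_atTop_nhds_zero (b / a) c hc).comp hv).congr' ?_
  filter_upwards [eventually_ge_atTop 1] with x hx
  rw [Function.comp_apply, ← rpow_mul (log_nonneg hx), mul_div_cancel₀ b ha.ne']

lemma eventually_log_rpow_le_rpow (b : ℝ) {c : ℝ} (hc : 0 < c) :
    ∀ᶠ x in atTop, log x ^ b ≤ x ^ c := by
  filter_upwards [(isLittleO_log_rpow_rpow_atTop b hc).eventuallyLE, eventually_ge_atTop 1]
    with x hx hx1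
  rwa [norm_of_nonneg (rpow_nonneg (log_nonneg hx1) _),
    norm_of_nonneg (rpow_nonneg (zero_le_one.trans hx1) _)] at hx

lemma eventually_correlationSum_le {r : ℕ → ℝ} (hr : ∀ t, r t ∈ Set.Icc (0 : ℝ) 1) {C ε : ℝ}
    (hε : 0 < ε) (hdecay : ∀ t : ℕ, 2 ≤ t → r t ≤ C / log t ^ (1 + 2 * ε)) (hC : 0 ≤ C) :
    ∀ᶠ R in atTop, correlationSum r R ≤ (13 + C * 4 ^ (1 + 2 * ε)) * √R / log R ^ (1 + ε) := by
  filter_upwards [eventually_ge_atTop (exp 1),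
    eventually_log_rpow_le_rpow (1 + ε) (c := 4⁻¹) (by norm_num),
    (tendsto_log_rpow_mul_exp_neg_mul_log_rpow (a := 2 * ε) (c := 8⁻¹) (by positivity)
      (by norm_num) (1 + ε)).eventually (ge_mem_nhds one_pos)] with R hRe hhead htail
  have hR : 1 < R := (one_lt_exp_iff.2 one_pos).trans_le hRe
  have hlog : 1 ≤ log R := by rwa [le_log_iff_exp_le (by linarith)]
  have hsqrt : 1 ≤ √R := one_le_sqrt.2 hR.le
  have hRsq : √R ^ 2 = R := sq_sqrt (by linarith)
  set z := log R ^ ε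
  have hz : 1 ≤ z := one_le_rpow hlog hε.le
  set P := log R ^ (1 + ε)
  have hP : 0 < P := by positivity
  have hmid : √R * z * (C * 4 ^ (1 + 2 * ε) / log R ^ (1 + 2 * ε)) =
      C * 4 ^ (1 + 2 * ε) * √R / P := by
    rw [show 1 + 2 * ε = (1 + ε) + ε by ring, rpow_add (by positivity : 0 < log R) (1 + ε) ε]
    field_simp
    simp only [z, P]
    ring
  have hgauss : -(√R * z) ^ 2 / (8 * R) = -8⁻¹ * log R ^ (2 * ε) := by
    rw [mul_pow, hRsq, ← rpow_mul_natCast (by positivity)]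
    field_simp
    ring_nf
  have hgeom : 1 + 8 * R / (2 * (√R * z)) ≤ 5 * √R := by
    have h : 8 * R / (2 * (√R * z)) = 4 * √R / z := by
      rw [div_eq_div_iff (by positivity) (by positivity)]
      linear_combination (8 * z) * hRsq.symm
    rw [h]
    linarith [div_le_self (by positivity : 0 ≤ 4 * √R) hz]
  have hquarter : R ^ (4⁻¹ : ℝ) ≤ √R / P := by
    rw [le_div_iff₀ hP, sqrt_eq_rpow, show (1 / 2 : ℝ) = 4⁻¹ + 4⁻¹ by norm_num,
      rpow_add (by linarith)]
    gcongr
  have htail' : exp (-8⁻¹ * log R ^ (2 * ε)) ≤ 1 / P := by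
    rw [le_div_iff₀ hP]; linarith
  calc correlationSum r R
      ≤ 8 * R ^ (4⁻¹ : ℝ) + √R * z * (C * 4 ^ (1 + 2 * ε) / log R ^ (1 + 2 * ε)) +
          exp (-(√R * z) ^ 2 / (8 * R)) * (1 + 8 * R / (2 * (√R * z))) :=
        correlationSum_le hr (by positivity) hdecay hC hR (by positivity)
    _ ≤ 8 * (√R / P) + C * 4 ^ (1 + 2 * ε) * √R / P + 1 / P * (5 * √R) := by
        rw [hmid, hgauss]
        gcongr
    _ = (13 + C * 4 ^ (1 + 2 * ε)) * √R / P := by ring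

/-- Correlation-sum estimate: if `r : ℕ → [0,1]` satisfies `r(t) = O((log t)^{-(1+2ε)})`,
then `∑_{ℓ ≥ 1} r(⌊ℓ/4⌋) e^{-ℓ²/(8R)} = O(√R/(log R)^{1+ε})` as `R → ∞`. -/
theorem stmt_13 (r : ℕ → ℝ) (hr01 : ∀ t, r t ∈ Set.Icc (0 : ℝ) 1)
    (ε : ℝ) (hε : 0 < ε)
    (hdecay : ∃ C : ℝ, ∀ t : ℕ, 2 ≤ t → r t ≤ C / (Real.log t) ^ (1 + 2 * ε)) :
    ∃ C' R₀ : ℝ, 0 < C' ∧ ∀ R : ℝ, R₀ ≤ R →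
      ∑' ℓ : ℕ, r ((ℓ + 1) / 4) * Real.exp (-((ℓ : ℝ) + 1) ^ 2 / (8 * R)) ≤
        C' * Real.sqrt R / (Real.log R) ^ (1 + ε) := by
  obtain ⟨C, hC⟩ := hdecay
  have hdecay₀ : ∀ t : ℕ, 2 ≤ t → r t ≤ max C 0 / log t ^ (1 + 2 * ε) := fun t ht ↦
    (hC t ht).trans <| by
      have : 0 ≤ log t := log_nonneg (by exact_mod_cast (by omega : 1 ≤ t))
      gcongr
      exact le_max_left C 0
  obtain ⟨R₀, hR₀⟩ :=
    eventually_atTop.1 (eventually_correlationSum_le hr01 hε hdecay₀ (le_max_right C 0))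
  exact ⟨_, R₀, by positivity, hR₀⟩
end
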